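/- arXiv:1703.09922 — 3 statements merged into one kernel-verified Lean document; each statement's English description precedes it below -/
import Mathlib

section
/- Let D ⊂ ℝ^N be a bounded open set and let v be a convex function on ℝ^N that is C² on D. If the gradient map ∇v is measure-preserving on D, i.e. m(A) = m((∇v)(A)) for every Borel set A ⊂ D (m being Lebesgue measure), then Δv ≥ N everywhere on D. -/
open MeasureTheory Metric Set Bornology
open scoped Topology RealInnerProductSpace ENNReal NNReal

noncomputable section

/-- Euclidean space `ℝ^N`. -/
abbrev Euc (N : ℕ) : Type := EuclideanSpace ℝ (Fin N)

/-- The (classical) Laplacian of `u` at `x`, i.e. the sum of the second partial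
derivatives of `u` in the coordinate directions at `x`. -/
noncomputable def lap {N : ℕ} (u : Euc N → ℝ) (x : Euc N) : ℝ :=
  ∑ i : Fin N,
    fderiv ℝ (fderiv ℝ u) x (EuclideanSpace.single i 1) (EuclideanSpace.single i 1)

/-- `∂Ω` is the disjoint union of finitely many smooth components: every boundary point
admits a smooth local defining function with nonvanishing derivative. -/
def SmoothBdry {N : ℕ} (Ω : Set (Euc N)) : Prop :=
  ∀ x ∈ frontier Ω, ∃ (U : Set (Euc N)) (f : Euc N → ℝ),
    IsOpen U ∧ x ∈ U ∧ ContDiff ℝ (⊤ : ℕ∞) f ∧ (∀ y ∈ U, fderiv ℝ f y ≠ 0) ∧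
    Ω ∩ U = {y ∈ U | f y < 0}

/-- `u ∈ C¹(Ω̄)`: `u` is continuous on `Ω̄`, differentiable on `Ω` with gradient `g` there,
and `g` is continuous on `Ω̄` (i.e. `∇u` extends continuously to the closure). -/
def C1OnClosure {N : ℕ} (Ω : Set (Euc N)) (u : Euc N → ℝ) (g : Euc N → Euc N) : Prop :=
  ContinuousOn u (closure Ω) ∧ ContinuousOn g (closure Ω) ∧
    ∀ x ∈ Ω, HasGradientAt u (g x) x

/-- The domain constant
`λ₁(Ω) = inf { sup_{x ∈ Ω̄} ‖∇u(x)‖ : u ∈ C¹(Ω̄), Δu = N on Ω }`. -/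
noncomputable def lambda1 (N : ℕ) (Ω : Set (Euc N)) : ℝ :=
  sInf { r : ℝ | ∃ (u : Euc N → ℝ) (g : Euc N → Euc N),
    C1OnClosure Ω u g ∧ ContDiffOn ℝ 2 u Ω ∧ (∀ x ∈ Ω, lap u x = N) ∧
    r = sSup ((fun x => ‖g x‖) '' closure Ω) }

/-- A harmonic vector field on `Ω`: continuous on `Ω̄`, `C¹` on `Ω`,
divergence-free and curl-free on `Ω`. -/
def IsHarmonicField (N : ℕ) (Ω : Set (Euc N)) (f : Euc N → Euc N) : Prop :=
  ContinuousOn f (closure Ω) ∧ ContDiffOn ℝ 1 f Ω ∧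
    (∀ x ∈ Ω, ∑ i : Fin N, fderiv ℝ f x (EuclideanSpace.single i 1) i = 0) ∧
    (∀ x ∈ Ω, ∀ j k : Fin N,
      fderiv ℝ f x (EuclideanSpace.single k 1) j
        = fderiv ℝ f x (EuclideanSpace.single j 1) k)

/-- The analytic content
`λ(Ω) = inf { sup_{x ∈ Ω̄} ‖x − f(x)‖ : f a harmonic vector field on Ω }`. -/
noncomputable def analyticContent (N : ℕ) (Ω : Set (Euc N)) : ℝ :=
  sInf { r : ℝ | ∃ f : Euc N → Euc N, IsHarmonicField N Ω f ∧
    r = sSup ((fun x => ‖x - f x‖) '' closure Ω) }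

/-- Subharmonicity on `Ω` via continuity and the sub-mean-value inequality. -/
def IsSubharmonicOn {N : ℕ} (f : Euc N → ℝ) (Ω : Set (Euc N)) : Prop :=
  ContinuousOn f Ω ∧ ∀ x ∈ Ω, ∀ r > 0, closedBall x r ⊆ Ω →
    f x ≤ ⨍ y in closedBall x r, f y

/-- `n` is the outward unit normal field on `∂Ω`. -/
def IsOutwardUnitNormal {N : ℕ} (Ω : Set (Euc N)) (n : Euc N → Euc N) : Prop :=
  ∀ x ∈ frontier Ω, ‖n x‖ = 1 ∧ ∃ ε > 0, ∀ t : ℝ, 0 < t → t < ε →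
    x + t • n x ∉ closure Ω ∧ x - t • n x ∈ Ω

end

/-- Subgradient inequality for convex differentiable functions. -/
lemma convex_subgrad {N : ℕ} {v : Euc N → ℝ} (hconv : ConvexOn ℝ Set.univ v)
    {z : Euc N} {φz : Euc N →L[ℝ] ℝ} (hd : HasFDerivAt v φz z) (y : Euc N) :
    φz (y - z) ≤ v y - v z := by
  set L : ℝ →ᵃ[ℝ] Euc N := AffineMap.lineMap z y with hL
  have hg : ConvexOn ℝ Set.univ (v ∘ L) := by
    simpa using hconv.comp_affineMap L
  have hder : HasDerivAt (v ∘ L) (φz (y - z)) 0 := by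
    have h1 : HasDerivAt (fun t : ℝ => t • (y - z) + z) ((1 : ℝ) • (y - z)) 0 :=
      ((hasDerivAt_id (0 : ℝ)).smul_const (y - z)).add_const z
    have h2 : HasFDerivAt v φz ((fun t : ℝ => t • (y - z) + z) 0) := by
      simpa using hd
    have h3 := h2.comp_hasDerivAt 0 h1
    have : (v ∘ L) = v ∘ (fun t : ℝ => t • (y - z) + z) := by
      funext t; simp [hL, AffineMap.lineMap_apply]
    rw [this]
    simpa using h3
  have := hg.le_slope_of_hasDerivAt (Set.mem_univ (0 : ℝ)) (Set.mem_univ (1 : ℝ))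
    one_pos hder
  have hslope : slope (v ∘ L) 0 1 = v y - v z := by
    simp [slope_def_field, hL, AffineMap.lineMap_apply]
  rw [hslope] at this
  exact this

/-- Nonnegativity of the second derivative of a convex function along any direction. -/
lemma snd_deriv_nonneg {N : ℕ} {v : Euc N → ℝ} (hconv : ConvexOn ℝ Set.univ v)
    {D : Set (Euc N)} (hD : IsOpen D) {φ : Euc N → (Euc N →L[ℝ] ℝ)}
    (hφ : ∀ y ∈ D, HasFDerivAt v (φ y) y)
    {x : Euc N} (hx : x ∈ D) {B : Euc N →L[ℝ] Euc N →L[ℝ] ℝ}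
    (hB : HasFDerivAt φ B x) (w : Euc N) : 0 ≤ B w w := by
  obtain ⟨ε, εpos, hball⟩ := Metric.isOpen_iff.1 hD x hx
  set δ : ℝ := ε / (‖w‖ + 1) with hδ
  have hw1 : (0 : ℝ) < ‖w‖ + 1 := by positivity
  have δpos : 0 < δ := div_pos εpos hw1
  have hmem : ∀ t : ℝ, |t| < δ → x + t • w ∈ D := by
    intro t ht
    apply hball
    rw [Metric.mem_ball, dist_eq_norm]
    have : ‖x + t • w - x‖ = |t| * ‖w‖ := by
      simp [norm_smul, abs_eq_self.2 (norm_nonneg w)]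
    rw [this]
    calc |t| * ‖w‖ ≤ |t| * (‖w‖ + 1) := by
          exact mul_le_mul_of_nonneg_left (by linarith) (abs_nonneg t)
      _ < δ * (‖w‖ + 1) := by exact mul_lt_mul_of_pos_right ht hw1
      _ = ε := by rw [hδ, div_mul_cancel₀ ε hw1.ne']
  have hψ : ∀ t ∈ Set.Ioo (0 : ℝ) δ, 0 ≤ φ (x + t • w) w - φ x w := by
    intro t ht
    have htm : x + t • w ∈ D := hmem t (by rw [abs_of_pos ht.1]; exact ht.2)
    have h1 := convex_subgrad hconv (hφ x hx) (x + t • w)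
    have h2 := convex_subgrad hconv (hφ _ htm) x
    have e1 : x + t • w - x = t • w := by abel
    have e2 : x - (x + t • w) = -(t • w) := by abel
    rw [e1] at h1
    rw [e2] at h2
    have h1' : t * φ x w ≤ v (x + t • w) - v x := by
      simpa [_root_.map_smul, smul_eq_mul] using h1
    have h2' : -(t * φ (x + t • w) w) ≤ v x - v (x + t • w) := by
      simpa [_root_.map_smul, smul_eq_mul] using h2
    nlinarith [ht.1]
  have hder : HasDerivAt (fun t : ℝ => φ (x + t • w) w) (B w w) 0 := by
    have h1 : HasDerivAt (fun t : ℝ => x + t • w) ((1 : ℝ) • w) 0 :=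
      ((hasDerivAt_id (0 : ℝ)).smul_const w).const_add x
    have h2 : HasFDerivAt φ B ((fun t : ℝ => x + t • w) 0) := by simpa using hB
    have h3 : HasDerivAt (fun t : ℝ => φ (x + t • w)) (B w) 0 := by
      have h5 := h2.comp_hasDerivAt 0 h1
      simp only [one_smul] at h5
      exact h5
    have h4 := h3.clm_apply (hasDerivAt_const (0 : ℝ) w)
    simpa using h4
  have htend : Filter.Tendsto (slope (fun t : ℝ => φ (x + t • w) w) 0) (𝓝[>] 0)
      (𝓝 (B w w)) :=
    (hasDerivAt_iff_tendsto_slope.1 hder).mono_left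
      (nhdsWithin_mono _ (fun t ht => ne_of_gt ht))
  refine ge_of_tendsto htend ?_
  filter_upwards [Ioo_mem_nhdsGT_of_mem ⟨le_refl (0 : ℝ), δpos⟩] with t ht
  have ht0 : 0 < t := ht.1
  rw [slope_def_field]
  have := hψ t ht
  have : (0 : ℝ) ≤ φ (x + t • w) w - φ x w := this
  have h0 : φ (x + (0:ℝ) • w) w = φ x w := by simp
  rw [h0]
  apply div_nonneg this (by linarith)

/-- AM-GM for a finite family of nonnegative reals. -/
lemma prod_le_pow_sum_div {N : ℕ} (hN : 0 < N) (μ : Fin N → ℝ) (hμ : ∀ i, 0 ≤ μ i) :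
    ∏ i, μ i ≤ ((∑ i, μ i) / N) ^ N := by
  have hNR : (0 : ℝ) < N := by exact_mod_cast hN
  have hsum : ∑ _i : Fin N, (N : ℝ)⁻¹ = 1 := by
    rw [Finset.sum_const, Finset.card_univ, Fintype.card_fin, nsmul_eq_mul,
      mul_inv_cancel₀ (ne_of_gt hNR)]
  have hgm := Real.geom_mean_le_arith_mean_weighted Finset.univ (fun _ => (N : ℝ)⁻¹) μ
    (fun i _ => by positivity) hsum (fun i _ => hμ i)
  have hrhs : ∑ i, (N : ℝ)⁻¹ * μ i = (∑ i, μ i) / N := by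
    rw [← Finset.mul_sum, inv_mul_eq_div]
  rw [hrhs] at hgm
  have hprod : ∏ i, μ i = (∏ i, μ i ^ ((N : ℝ)⁻¹)) ^ N := by
    rw [← Finset.prod_pow]
    refine Finset.prod_congr rfl fun i _ => ?_
    rw [← Real.rpow_natCast (μ i ^ ((N : ℝ)⁻¹)) N, ← Real.rpow_mul (hμ i),
      inv_mul_cancel₀ (ne_of_gt hNR), Real.rpow_one]
  rw [hprod]
  apply pow_le_pow_left₀ _ hgm
  exact Finset.prod_nonneg fun i _ => Real.rpow_nonneg (hμ i) _

/-- The canonical `ℝ`-linear equivalence between the dual of `Euc N` and `Euc N`. -/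
noncomputable def dualEquiv (N : ℕ) : (Euc N →L[ℝ] ℝ) ≃L[ℝ] Euc N :=
  (InnerProductSpace.toDual ℝ (Euc N)).symm.toContinuousLinearEquiv

lemma dualEquiv_inner {N : ℕ} (ℓ : Euc N →L[ℝ] ℝ) (x : Euc N) :
    @inner ℝ _ _ (dualEquiv N ℓ) x = ℓ x :=
  InnerProductSpace.toDual_symm_apply

/-- Pointwise determinant bound from convexity and the Laplacian. -/
lemma key_pointwise {N : ℕ} {D : Set (Euc N)} (hD : IsOpen D) (hN : 0 < N)
    {v : Euc N → ℝ} (hconv : ConvexOn ℝ Set.univ v) (hC2 : ContDiffOn ℝ 2 v D)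
    {y : Euc N} (hy : y ∈ D) :
    0 ≤ lap v y ∧ |(fderiv ℝ (gradient v) y).det| ≤ (lap v y / N) ^ N := by
  classical
  set φ : Euc N → (Euc N →L[ℝ] ℝ) := fderiv ℝ v with hφdef
  have hφ : ∀ z ∈ D, HasFDerivAt v (φ z) z := by
    intro z hz
    exact ((hC2.contDiffAt (hD.mem_nhds hz)).differentiableAt
      (by norm_num)).hasFDerivAt
  have hφC1 : ContDiffOn ℝ 1 φ D := hC2.fderiv_of_isOpen hD (by norm_num)
  have hφdiff : DifferentiableAt ℝ φ y :=
    (hφC1.contDiffAt (hD.mem_nhds hy)).differentiableAt (by norm_num)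
  set B : Euc N →L[ℝ] Euc N →L[ℝ] ℝ := fderiv ℝ φ y with hBdef
  have hB : HasFDerivAt φ B y := hφdiff.hasFDerivAt
  have hsym : ∀ a b : Euc N, B a b = B b a := fun a b =>
    second_derivative_symmetric_of_eventually
      (Filter.eventually_of_mem (hD.mem_nhds hy) hφ) hB a b
  have hpsd : ∀ w : Euc N, 0 ≤ B w w := fun w =>
    snd_deriv_nonneg hconv hD hφ hy hB w
  set e : Fin N → Euc N := fun i => EuclideanSpace.single i (1 : ℝ) with he
  set M : Matrix (Fin N) (Fin N) ℝ := fun i j => B (e j) (e i) with hM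
  -- trace
  have hlapM : lap v y = M.trace := by
    rw [lap, Matrix.trace]
    refine Finset.sum_congr rfl fun i _ => ?_
    simp [hM, Matrix.diag, he, hφdef, hBdef]
  -- Hermitian
  have hherm : M.IsHermitian := by
    ext i j
    simp only [Matrix.conjTranspose_apply, hM, star_trivial]
    exact hsym (e i) (e j)
  -- PSD
  have hquad : ∀ c : Fin N → ℝ, dotProduct c (M.mulVec c)
      = B (∑ j, c j • e j) (∑ j, c j • e j) := by
    intro c
    have hM' : ∀ i j, M i j = B (e j) (e i) := fun i j => rfl
    have hexp : B (∑ j, c j • e j) (∑ i, c i • e i)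
        = ∑ j, ∑ i, c j * (c i * B (e i) (e j)) := by
      simp only [map_sum, _root_.map_smul, ContinuousLinearMap.coe_sum',
        ContinuousLinearMap.coe_smul', Finset.sum_apply, Pi.smul_apply, smul_eq_mul,
        Finset.mul_sum]
    rw [hexp]
    simp only [dotProduct, Matrix.mulVec, hM', Finset.mul_sum]
    rw [Finset.sum_comm]
    apply Finset.sum_congr rfl
    intro j _
    apply Finset.sum_congr rfl
    intro i _
    rw [hsym (e j) (e i)]
    ring
  have hPSD : M.PosSemidef := by
    refine Matrix.PosSemidef.of_dotProduct_mulVec_nonneg hherm fun c => ?_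
    have : star c = c := by simp
    rw [this]
    rw [hquad c]
    exact hpsd _
  -- determinant
  have hgradeq : gradient v = (⇑(dualEquiv N)) ∘ φ := rfl
  have hHeq : fderiv ℝ (gradient v) y
      = ((dualEquiv N : (Euc N →L[ℝ] ℝ) →L[ℝ] Euc N)).comp B := by
    rw [hgradeq]
    exact (dualEquiv N).comp_fderiv
  have hdet : (fderiv ℝ (gradient v) y).det = M.det := by
    rw [ContinuousLinearMap.det]
    rw [← LinearMap.det_toMatrix (EuclideanSpace.basisFun (Fin N) ℝ).toBasis]
    congr 1
    ext i j
    rw [LinearMap.toMatrix_apply]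
    simp only [OrthonormalBasis.coe_toBasis, OrthonormalBasis.coe_toBasis_repr_apply,
      OrthonormalBasis.repr_apply_apply, EuclideanSpace.basisFun_apply]
    rw [hHeq]
    simp only [ContinuousLinearMap.coe_coe, ContinuousLinearMap.coe_comp',
      ContinuousLinearEquiv.coe_coe, Function.comp_apply]
    rw [real_inner_comm, dualEquiv_inner]
  -- eigenvalues
  set μ : Fin N → ℝ := hherm.eigenvalues with hμ
  have hμ0 : ∀ i, 0 ≤ μ i := fun i => hPSD.eigenvalues_nonneg i
  have hdetμ : M.det = ∏ i, μ i := by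
    simpa using hherm.det_eq_prod_eigenvalues
  have htrμ : M.trace = ∑ i, μ i := by
    simpa using hherm.trace_eq_sum_eigenvalues
  have hlap0 : 0 ≤ lap v y := by
    rw [hlapM, htrμ]
    exact Finset.sum_nonneg fun i _ => hμ0 i
  refine ⟨hlap0, ?_⟩
  have hdetnn : 0 ≤ M.det := by
    rw [hdetμ]
    exact Finset.prod_nonneg fun i _ => hμ0 i
  rw [hdet, abs_of_nonneg hdetnn, hdetμ, hlapM, htrμ]
  exact prod_le_pow_sum_div hN μ hμ0

/-- If v is convex on ℝ^N, C² on a bounded open set D, and its gradient map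
is measure-preserving on D, then Δv ≥ N on D. -/
theorem laplacian_ge_of_measurePreserving_gradient
    (N : ℕ) (hN : 2 ≤ N) (D : Set (Euc N)) (hD : IsOpen D) (hDb : IsBounded D)
    (v : Euc N → ℝ) (hconv : ConvexOn ℝ Set.univ v) (hC2 : ContDiffOn ℝ 2 v D)
    (hmp : ∀ A : Set (Euc N), A ⊆ D → MeasurableSet A →
      volume A = volume (gradient v '' A)) :
    ∀ x ∈ D, (N : ℝ) ≤ lap v x := by
  classical
  have hNpos : 0 < N := by omega
  have hNR : (0 : ℝ) < N := by exact_mod_cast hNpos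
  intro x₀ hx₀
  by_contra hlt
  push_neg at hlt
  -- continuity of the Laplacian on D
  have hφC1 : ContDiffOn ℝ 1 (fderiv ℝ v) D := hC2.fderiv_of_isOpen hD (by norm_num)
  have hcont2 : ContinuousOn (fun y => fderiv ℝ (fderiv ℝ v) y) D :=
    hφC1.continuousOn_fderiv_of_isOpen hD le_rfl
  have hlapcont : ContinuousOn (lap v) D := by
    apply continuousOn_finset_sum
    intro i _
    exact ((ContinuousLinearMap.apply ℝ ℝ (EuclideanSpace.single i (1:ℝ))).continuous.comp
      (ContinuousLinearMap.apply ℝ (Euc N →L[ℝ] ℝ)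
        (EuclideanSpace.single i (1:ℝ))).continuous).comp_continuousOn hcont2
  obtain ⟨hlap0, _⟩ := key_pointwise hD hNpos hconv hC2 hx₀
  set θ : ℝ := (lap v x₀ + N) / 2 with hθ
  have h1 : lap v x₀ < θ := by rw [hθ]; linarith
  have h2 : θ < N := by rw [hθ]; linarith
  have h0θ : 0 ≤ θ := by rw [hθ]; linarith
  -- a closed ball on which lap < θ
  have hU : {y | y ∈ D ∧ lap v y < θ} ∈ 𝓝 x₀ := by
    have hcA : ContinuousAt (lap v) x₀ :=
      (hlapcont x₀ hx₀).continuousAt (hD.mem_nhds hx₀)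
    have h3 : {y | lap v y < θ} ∈ 𝓝 x₀ := hcA (Iio_mem_nhds h1)
    filter_upwards [hD.mem_nhds hx₀, h3] with y hy1 hy2
    exact ⟨hy1, hy2⟩
  obtain ⟨r, rpos, hrsub⟩ := Metric.nhds_basis_closedBall.mem_iff.1 hU
  set K : Set (Euc N) := closedBall x₀ r with hK
  have hKD : K ⊆ D := fun y hy => (hrsub hy).1
  have hmeasK : MeasurableSet K := measurableSet_closedBall
  have hvol := hmp K hKD hmeasK
  -- Jacobian inequality
  have hgdiff : ∀ y ∈ K, HasFDerivWithinAt (gradient v) (fderiv ℝ (gradient v) y) K y := by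
    intro y hy
    have hyD := hKD hy
    have hφdiff : DifferentiableAt ℝ (fderiv ℝ v) y :=
      (hφC1.contDiffAt (hD.mem_nhds hyD)).differentiableAt (by norm_num)
    have : DifferentiableAt ℝ (gradient v) y := by
      have : gradient v = (⇑(InnerProductSpace.toDual ℝ (Euc N)).symm) ∘ fderiv ℝ v := rfl
      rw [this]
      exact ((InnerProductSpace.toDual ℝ (Euc N)).symm.toContinuousLinearEquiv.differentiableAt).comp
        y hφdiff
    exact this.hasFDerivAt.hasFDerivWithinAt
  have hjac := MeasureTheory.addHaar_image_le_lintegral_abs_det_fderiv volume hmeasK hgdiff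
  -- bound the integrand
  set c : ℝ := (θ / N) ^ N with hc
  have hbound : ∀ y ∈ K, ENNReal.ofReal |(fderiv ℝ (gradient v) y).det| ≤ ENNReal.ofReal c := by
    intro y hy
    have hyD := hKD hy
    have hylap : lap v y < θ := (hrsub hy).2
    obtain ⟨hl0, hdle⟩ := key_pointwise hD hNpos hconv hC2 hyD
    apply ENNReal.ofReal_le_ofReal
    refine hdle.trans ?_
    have : lap v y / N ≤ θ / N := by gcongr
    calc (lap v y / N) ^ N ≤ (θ / N) ^ N := by
          apply pow_le_pow_left₀ (div_nonneg hl0 hNR.le) this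
      _ = c := rfl
  have hint : ∫⁻ y in K, ENNReal.ofReal |(fderiv ℝ (gradient v) y).det| ∂volume
      ≤ ENNReal.ofReal c * volume K := by
    calc ∫⁻ y in K, ENNReal.ofReal |(fderiv ℝ (gradient v) y).det| ∂volume
        ≤ ∫⁻ _y in K, ENNReal.ofReal c ∂volume := setLIntegral_mono' hmeasK hbound
      _ = ENNReal.ofReal c * volume K := setLIntegral_const K _
  have hclt : c < 1 := by
    have hdiv : θ / N < 1 := (div_lt_one hNR).2 h2
    have hdiv0 : 0 ≤ θ / N := div_nonneg h0θ hNR.le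
    calc c = (θ / N) ^ N := rfl
      _ < 1 := pow_lt_one₀ hdiv0 hdiv (by omega)
  have hc1 : ENNReal.ofReal c < 1 := by
    rw [← ENNReal.ofReal_one]
    exact ENNReal.ofReal_lt_ofReal_iff_of_nonneg (by positivity) |>.2 hclt
  have hKpos : volume K ≠ 0 := (measure_closedBall_pos volume x₀ rpos).ne'
  have hKfin : volume K ≠ ⊤ := measure_closedBall_lt_top.ne
  have hcontra : volume K < volume K := by
    calc volume K = volume (gradient v '' K) := hvol
      _ ≤ ∫⁻ y in K, ENNReal.ofReal |(fderiv ℝ (gradient v) y).det| ∂volume := hjac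
      _ ≤ ENNReal.ofReal c * volume K := hint
      _ < 1 * volume K := (ENNReal.mul_lt_mul_iff_left hKpos hKfin).2 hc1
      _ = volume K := one_mul _
  exact lt_irrefl _ hcontra
end

section
/- Let N ≥ 3 and define u(x) = (N/(2(N−2))) (x₁² + ⋯ + x_{N−1}² − x_N²) on the closed unit ball of ℝ^N. Then Δu = N on B(0,1) and ‖∇u(x)‖ = N/(N−2) for every x with ‖x‖ = 1; since λ₁(B(0,1)) = 1 ≠ N/(N−2), the function u satisfies Δu = N and has ‖∇u‖ constant on the boundary sphere yet is not a minimizer for λ₁(B(0,1)). -/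
open MeasureTheory Metric Set Bornology
open scoped Topology RealInnerProductSpace ENNReal NNReal

/-! ### Auxiliary lemmas -/

noncomputable section AuxLemmas
open Filter

/-- The bilinear form `(v,w) ↦ ∑ i, v i * w i` as a CLM into CLMs. -/
noncomputable def gid (N : ℕ) : Euc N →L[ℝ] (Euc N →L[ℝ] ℝ) :=
  ∑ i, (EuclideanSpace.proj i).smulRight (EuclideanSpace.proj i)

lemma gid_apply {N : ℕ} (v w : Euc N) : gid N v w = ∑ i, v i * w i := by
  simp [gid, ContinuousLinearMap.sum_apply, smul_eq_mul, mul_comm]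

lemma hasFDerivAt_sqsum {N : ℕ} (x : Euc N) :
    HasFDerivAt (fun y : Euc N => ∑ i, y i ^ 2) ((2:ℝ) • gid N x) x := by
  have h : ∀ i : Fin N, HasFDerivAt (fun y : Euc N => y i ^ 2)
      ((2 * x i) • (EuclideanSpace.proj (𝕜 := ℝ) i)) x := by
    intro i
    have hp : HasFDerivAt (fun y : Euc N => y i) (EuclideanSpace.proj (𝕜 := ℝ) i) x :=
      (EuclideanSpace.proj (𝕜 := ℝ) i).hasFDerivAt
    have := hp.mul hp
    refine HasFDerivAt.congr_of_eventuallyEq (this.congr_fderiv ?_) (Filter.Eventually.of_forall fun y => ?_)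
    · ext w; simp; ring
    · simp [sq]
  have := HasFDerivAt.sum (fun i (_ : i ∈ Finset.univ) => h i)
  refine (this.congr_fderiv (Eq.symm ?_)).congr_of_eventuallyEq (Filter.Eventually.of_forall fun y => ?_)
  swap
  · simp [Finset.sum_apply]
  ext w
  simp [gid_apply, ContinuousLinearMap.sum_apply, smul_eq_mul, Finset.mul_sum]
  ring_nf

/-- Second derivative test: if `φ' = ψ` near `0` and `ψ` has positive derivative at `0`,
then `φ` has no local max at `0`. -/
lemma secondDerivTest {φ ψ : ℝ → ℝ} {a : ℝ} (ha : 0 < a)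
    (hφ : ∀ᶠ t in 𝓝 (0:ℝ), HasDerivAt φ (ψ t) t)
    (hψ : HasDerivAt ψ a 0) (hmax : IsLocalMax φ 0) : False := by
  have hψ0 : ψ 0 = 0 := hmax.hasDerivAt_eq_zero hφ.self_of_nhds
  have hslope : Tendsto (slope ψ 0) (𝓝[≠] (0:ℝ)) (𝓝 a) :=
    hasDerivAt_iff_tendsto_slope.mp hψ
  have hslope' : Tendsto (slope ψ 0) (𝓝[>] (0:ℝ)) (𝓝 a) :=
    hslope.mono_left (nhdsWithin_mono _ (fun t ht => ne_of_gt ht))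
  have hpos : ∀ᶠ t in 𝓝[>] (0:ℝ), 0 < ψ t := by
    filter_upwards [hslope'.eventually (eventually_gt_nhds ha), self_mem_nhdsWithin]
      with t h1 h2
    have : slope ψ 0 t = ψ t / t := by simp [slope_def_field, hψ0]
    rw [this] at h1
    have := mul_pos h1 h2
    rwa [div_mul_cancel₀] at this
    exact ne_of_gt h2
  obtain ⟨δ₁, hδ₁, h1⟩ := Metric.eventually_nhds_iff.mp (hφ.and hmax)
  obtain ⟨u, hu, h2⟩ := mem_nhdsGT_iff_exists_Ioo_subset.mp hpos
  have hu' : 0 < u := hu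
  have h3 : 0 < min u 1 := lt_min hu' one_pos
  set t₀ : ℝ := min (δ₁/2) ((min u 1)/2) with ht₀
  have ht₀pos : 0 < t₀ := lt_min (by linarith) (by linarith)
  have ht₀lt : t₀ < δ₁ := lt_of_le_of_lt (min_le_left _ _) (by linarith)
  have ht₀u : t₀ < u := by
    have h4 : min u 1 ≤ u := min_le_left u 1
    have : (min u 1)/2 < u := by linarith
    exact lt_of_le_of_lt (min_le_right _ _) this
  have hmono : StrictMonoOn φ (Icc 0 t₀) := by
    apply strictMonoOn_of_deriv_pos (convex_Icc 0 t₀)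
    · intro t ht
      have : |t| < δ₁ := by
        rw [abs_of_nonneg ht.1]; exact lt_of_le_of_lt ht.2 ht₀lt
      exact ((h1 (by simpa [Real.dist_eq] using this)).1.differentiableAt).continuousAt.continuousWithinAt
    · intro t ht
      rw [interior_Icc] at ht
      have hmem : |t| < δ₁ := by
        rw [abs_of_nonneg (le_of_lt ht.1)]; exact lt_trans ht.2 ht₀lt
      have hd := (h1 (by simpa [Real.dist_eq] using hmem)).1
      rw [hd.deriv]
      exact h2 ⟨ht.1, lt_trans ht.2 ht₀u⟩
  have hlt : φ 0 < φ t₀ := hmono ⟨le_refl 0, le_of_lt ht₀pos⟩ ⟨le_of_lt ht₀pos, le_refl _⟩ ht₀pos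
  have hle : φ t₀ ≤ φ 0 := by
    have : |t₀| < δ₁ := by rw [abs_of_pos ht₀pos]; exact ht₀lt
    exact (h1 (by simpa [Real.dist_eq] using this)).2
  linarith

/-- At an interior local max along direction `v`, the second directional derivative
is nonpositive. -/
lemma slice_nonpos {E : Type*} [NormedAddCommGroup E] [NormedSpace ℝ E]
    {f : E → ℝ} {Ω : Set E} (hΩ : IsOpen Ω)
    (hf : ContDiffOn ℝ 2 f Ω) {x₀ : E} (hx₀ : x₀ ∈ Ω) (v : E)
    (hmax : IsLocalMax (fun t : ℝ => f (x₀ + t • v)) 0) :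
    fderiv ℝ (fderiv ℝ f) x₀ v v ≤ 0 := by
  by_contra hcon
  push_neg at hcon
  have hline : ∀ t : ℝ, HasDerivAt (fun s : ℝ => x₀ + s • v) v t := by
    intro t
    have := ((hasDerivAt_id t).smul_const v).const_add x₀
    simpa using this
  have hdiff : ∀ y ∈ Ω, DifferentiableAt ℝ f y := fun y hy =>
    (hf.differentiableOn (by norm_num)).differentiableAt (hΩ.mem_nhds hy)
  have hmemev : ∀ᶠ t in 𝓝 (0:ℝ), x₀ + t • v ∈ Ω := by
    have hc : ContinuousAt (fun t : ℝ => x₀ + t • v) 0 := (hline 0).continuousAt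
    apply hc.preimage_mem_nhds
    simpa using hΩ.mem_nhds hx₀
  set ψ : ℝ → ℝ := fun t => fderiv ℝ f (x₀ + t • v) v with hψdef
  have hφ : ∀ᶠ t in 𝓝 (0:ℝ), HasDerivAt (fun s : ℝ => f (x₀ + s • v)) (ψ t) t := by
    filter_upwards [hmemev] with t ht
    exact ((hdiff _ ht).hasFDerivAt).comp_hasDerivAt t (hline t)
  have hfd : DifferentiableAt ℝ (fderiv ℝ f) x₀ := by
    have h2 : ContDiffAt ℝ 2 f x₀ := hf.contDiffAt (hΩ.mem_nhds hx₀)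
    have := h2.fderiv_right (m := 1) (by norm_num)
    exact this.differentiableAt (by norm_num)
  have hc1 : HasDerivAt (fun t : ℝ => fderiv ℝ f (x₀ + t • v))
      (fderiv ℝ (fderiv ℝ f) x₀ v) 0 := by
    have h0 : HasFDerivAt (fderiv ℝ f) (fderiv ℝ (fderiv ℝ f) x₀) (x₀ + (0:ℝ) • v) := by
      simpa using hfd.hasFDerivAt
    have := h0.comp_hasDerivAt 0 (hline 0)
    exact this
  have hψ : HasDerivAt ψ (fderiv ℝ (fderiv ℝ f) x₀ v v) 0 := by
    have := hc1.clm_apply (hasDerivAt_const 0 v)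
    simpa using this
  exact secondDerivTest hcon hφ hψ hmax

set_option maxHeartbeats 1000000 in
/-- The key lower bound: any admissible `u` for `λ₁(B(0,1))` has `sup ‖∇u‖ ≥ 1`. -/
lemma lower_bound {N : ℕ} (hN : 1 ≤ N) (u : Euc N → ℝ) (g : Euc N → Euc N)
    (hC1 : C1OnClosure (ball (0 : Euc N) 1) u g)
    (hC2 : ContDiffOn ℝ 2 u (ball (0 : Euc N) 1))
    (hlap : ∀ x ∈ ball (0 : Euc N) 1, lap u x = N) :
    (1:ℝ) ≤ sSup ((fun x => ‖g x‖) '' closure (ball (0 : Euc N) 1)) := by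
  obtain ⟨hu_cont, hg_cont, hgrad⟩ := hC1
  have hclos : closure (ball (0 : Euc N) 1) = closedBall 0 1 := closure_ball 0 one_ne_zero
  rw [hclos] at hu_cont hg_cont ⊢
  set M := sSup ((fun x => ‖g x‖) '' closedBall (0 : Euc N) 1) with hM
  have hbdd : BddAbove ((fun x => ‖g x‖) '' closedBall (0 : Euc N) 1) :=
    (isCompact_closedBall _ _).bddAbove_image hg_cont.norm
  have hM0 : 0 ≤ M := by
    refine le_trans (norm_nonneg (g 0)) (le_csSup hbdd ⟨0, by simp, rfl⟩)
  -- key estimate for each ε ∈ (0, 1/2)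
  have key : ∀ ε : ℝ, 0 < ε → ε < 1/2 → 1 - 2*ε ≤ M := by
    intro ε hε hε2
    set q : Euc N → ℝ := fun x => (1/2 - ε) * ∑ i, x i ^ 2 with hqdef
    have hq : ∀ y : Euc N, HasFDerivAt q ((1 - 2*ε) • gid N y) y := by
      intro y
      have h1 := (hasFDerivAt_sqsum y).const_mul (1/2 - ε)
      have h2 : (1/2 - ε) • ((2:ℝ) • gid N y) = (1 - 2*ε) • gid N y := by
        rw [smul_smul]; ring_nf
      rw [h2] at h1; exact h1
    have hq_cd : ContDiff ℝ 2 q :=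
      contDiff_const.mul (ContDiff.sum fun i _ => by fun_prop)
    set h : Euc N → ℝ := fun x => u x - q x with hhdef
    have hh_cont : ContinuousOn h (closedBall (0 : Euc N) 1) :=
      hu_cont.sub hq_cd.continuous.continuousOn
    obtain ⟨x₀, hx₀mem, hx₀max⟩ := (isCompact_closedBall (0 : Euc N) 1).exists_isMaxOn
      ⟨0, by simp⟩ hh_cont
    have hx₀max' : ∀ y ∈ closedBall (0 : Euc N) 1, h y ≤ h x₀ := isMaxOn_iff.mp hx₀max
    have hx₀le : ‖x₀‖ ≤ 1 := mem_closedBall_zero_iff.mp hx₀mem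
    -- the max cannot be interior
    have hsphere : ‖x₀‖ = 1 := by
      by_contra hne
      have hx₀lt : ‖x₀‖ < 1 := lt_of_le_of_ne hx₀le hne
      have hx₀Ω : x₀ ∈ ball (0 : Euc N) 1 := mem_ball_zero_iff.mpr hx₀lt
      have hhC2 : ContDiffOn ℝ 2 h (ball (0 : Euc N) 1) := hC2.sub hq_cd.contDiffOn
      -- slices give nonpositive second directional derivatives
      have hslice : ∀ i : Fin N,
          fderiv ℝ (fderiv ℝ h) x₀ (EuclideanSpace.single i 1) (EuclideanSpace.single i 1) ≤ 0 := by
        intro i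
        apply slice_nonpos isOpen_ball hhC2 hx₀Ω
        have hev : ∀ᶠ t in 𝓝 (0:ℝ), x₀ + t • (EuclideanSpace.single i 1 : Euc N) ∈
            ball (0 : Euc N) 1 := by
          have hc : ContinuousAt (fun t : ℝ => x₀ + t • (EuclideanSpace.single i 1 : Euc N)) 0 := by
            fun_prop
          apply hc.preimage_mem_nhds
          simpa using isOpen_ball.mem_nhds hx₀Ω
        filter_upwards [hev] with t ht
        simpa using hx₀max' _ (ball_subset_closedBall ht)
      -- compute the sum of the second directional derivatives of h at x₀
      have hfd : DifferentiableAt ℝ (fderiv ℝ u) x₀ := by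
        have h2 : ContDiffAt ℝ 2 u x₀ := hC2.contDiffAt (isOpen_ball.mem_nhds hx₀Ω)
        exact (h2.fderiv_right (m := 1) (by norm_num)).differentiableAt (by norm_num)
      have hev2 : fderiv ℝ h =ᶠ[𝓝 x₀] fun y => fderiv ℝ u y - ((1 - 2*ε) • gid N) y := by
        filter_upwards [isOpen_ball.mem_nhds hx₀Ω] with y hy
        have hud : DifferentiableAt ℝ u y :=
          (hC2.differentiableOn (by norm_num)).differentiableAt (isOpen_ball.mem_nhds hy)
        have : fderiv ℝ h y = fderiv ℝ u y - fderiv ℝ q y := fderiv_sub hud (hq y).differentiableAt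
        rw [this, (hq y).fderiv]
        simp
      have hFd : HasFDerivAt (fun y => fderiv ℝ u y - ((1 - 2*ε) • gid N) y)
          (fderiv ℝ (fderiv ℝ u) x₀ - (1 - 2*ε) • gid N) x₀ :=
        hfd.hasFDerivAt.sub ((1 - 2*ε) • gid N).hasFDerivAt
      have heq : fderiv ℝ (fderiv ℝ h) x₀ = fderiv ℝ (fderiv ℝ u) x₀ - (1 - 2*ε) • gid N := by
        rw [hev2.fderiv_eq]; exact hFd.fderiv
      have hgid1 : ∀ i : Fin N,
          gid N (EuclideanSpace.single i 1 : Euc N) (EuclideanSpace.single i 1 : Euc N) = 1 := by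
        intro i
        rw [gid_apply]
        simp [EuclideanSpace.single_apply]
      have hsum : ∑ i : Fin N, fderiv ℝ (fderiv ℝ h) x₀ (EuclideanSpace.single i 1)
          (EuclideanSpace.single i 1) = 2*ε*N := by
        have hlapu := hlap x₀ hx₀Ω
        rw [lap] at hlapu
        calc ∑ i : Fin N, fderiv ℝ (fderiv ℝ h) x₀ (EuclideanSpace.single i 1)
              (EuclideanSpace.single i 1)
            = ∑ i : Fin N, (fderiv ℝ (fderiv ℝ u) x₀ (EuclideanSpace.single i 1)
              (EuclideanSpace.single i 1) - (1 - 2*ε) *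
                gid N (EuclideanSpace.single i 1) (EuclideanSpace.single i 1)) := by
              apply Finset.sum_congr rfl
              intro i _
              rw [heq]
              simp
          _ = (N : ℝ) - (1 - 2*ε) * N := by
              rw [Finset.sum_sub_distrib, hlapu]
              congr 1
              calc ∑ i : Fin N, (1 - 2*ε) * gid N (EuclideanSpace.single i 1)
                    (EuclideanSpace.single i 1)
                  = ∑ _i : Fin N, (1 - 2*ε) :=
                    Finset.sum_congr rfl (fun i _ => by rw [hgid1 i, mul_one])
                _ = (1 - 2*ε) * N := by
                    rw [Finset.sum_const, Finset.card_univ, Fintype.card_fin, nsmul_eq_mul]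
                    ring
          _ = 2*ε*N := by ring
      have hsum_le : ∑ i : Fin N, fderiv ℝ (fderiv ℝ h) x₀ (EuclideanSpace.single i 1)
          (EuclideanSpace.single i 1) ≤ 0 :=
        Finset.sum_nonpos fun i _ => hslice i
      rw [hsum] at hsum_le
      have hNpos : (0:ℝ) < N := by exact_mod_cast Nat.lt_of_lt_of_le Nat.zero_lt_one hN
      nlinarith
    -- boundary case: radial derivative argument
    have hs1 : ∑ i, (x₀ i) ^ 2 = 1 := by
      have := EuclideanSpace.norm_eq x₀
      rw [hsphere] at this
      have h2 : ∑ i, ‖x₀ i‖ ^ 2 = 1 := Real.sqrt_eq_one.mp this.symm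
      simpa [Real.norm_eq_abs, sq_abs] using h2
    have hmemcb : ∀ t : ℝ, 0 ≤ t → t ≤ 1 → t • x₀ ∈ closedBall (0 : Euc N) 1 := by
      intro t h0 h1
      rw [mem_closedBall_zero_iff, norm_smul, hsphere, mul_one, Real.norm_eq_abs,
        abs_of_nonneg h0]
      exact h1
    have hcontmap : Continuous (fun t : ℝ => t • x₀) := by fun_prop
    set ψ : ℝ → ℝ := fun t => h (t • x₀) with hψdef
    set F : ℝ → ℝ := fun t => ⟪g (t • x₀), x₀⟫ - (1 - 2*ε) * t with hFdef
    have hψd : ∀ t ∈ Ioo (0:ℝ) 1, HasDerivAt ψ (F t) t := by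
      intro t ht
      have hyb : t • x₀ ∈ ball (0 : Euc N) 1 := by
        rw [mem_ball_zero_iff, norm_smul, hsphere, mul_one, Real.norm_eq_abs,
          abs_of_pos ht.1]
        exact ht.2
      have hlin : HasDerivAt (fun s : ℝ => s • x₀) x₀ t := by
        simpa using (hasDerivAt_id t).smul_const x₀
      have hu1 : HasDerivAt (fun s : ℝ => u (s • x₀)) ⟪g (t • x₀), x₀⟫ t := by
        have hfd := hasGradientAt_iff_hasFDerivAt.mp (hgrad _ hyb)
        have := hfd.comp_hasDerivAt t hlin
        simp only [InnerProductSpace.toDual_apply_apply] at this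
        exact this
      have hq1 : HasDerivAt (fun s : ℝ => q (s • x₀)) ((1 - 2*ε) * t) t := by
        have heq : (fun s : ℝ => q (s • x₀)) = fun s : ℝ => (1/2 - ε) * s ^ 2 := by
          funext s
          simp only [hqdef]
          have : ∀ i, ((s • x₀ : Euc N) i) ^ 2 = s^2 * (x₀ i)^2 := by
            intro i
            rw [PiLp.smul_apply, smul_eq_mul]
            ring
          rw [Finset.sum_congr rfl fun i _ => this i, ← Finset.mul_sum, hs1]
          ring
        rw [heq]
        have := (hasDerivAt_pow 2 t).const_mul (1/2 - ε)
        refine this.congr_deriv ?_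
        ring
      have := hu1.sub hq1
      exact this
    have hψcont : ContinuousOn ψ (Icc 0 1) := by
      apply hh_cont.comp hcontmap.continuousOn
      intro t ht
      exact hmemcb t ht.1 ht.2
    -- the limit L is nonnegative
    have hL : 0 ≤ ⟪g x₀, x₀⟫ - (1 - 2*ε) := by
      by_contra hLneg
      push_neg at hLneg
      have hx₀cb : x₀ ∈ closedBall (0 : Euc N) 1 := hx₀mem
      have hgx : ContinuousWithinAt g (closedBall (0 : Euc N) 1) x₀ := hg_cont x₀ hx₀cb
      have tend1 : Tendsto (fun t : ℝ => t • x₀) (𝓝[<] (1:ℝ))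
          (𝓝[closedBall (0 : Euc N) 1] x₀) := by
        apply tendsto_nhdsWithin_of_tendsto_nhds_of_eventually_within
        · have h5 : Tendsto (fun t : ℝ => t • x₀) (𝓝 (1:ℝ)) (𝓝 ((1:ℝ) • x₀)) :=
            hcontmap.tendsto 1
          rw [one_smul] at h5
          exact h5.mono_left nhdsWithin_le_nhds
        · filter_upwards [Ioo_mem_nhdsLT_of_mem (show (1:ℝ) ∈ Ioc (0:ℝ) 1 by constructor <;> norm_num)]
            with t ht
          exact hmemcb t (le_of_lt ht.1) (le_of_lt ht.2)
      have tendF : Tendsto F (𝓝[<] (1:ℝ)) (𝓝 (⟪g x₀, x₀⟫ - (1 - 2*ε))) := by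
        apply Tendsto.sub
        · exact (hgx.tendsto.comp tend1).inner tendsto_const_nhds
        · have : Tendsto (fun t : ℝ => (1 - 2*ε) * t) (𝓝 (1:ℝ)) (𝓝 ((1 - 2*ε) * 1)) :=
            (continuous_const.mul continuous_id).tendsto 1
          rw [mul_one] at this
          exact this.mono_left nhdsWithin_le_nhds
      have hFneg : ∀ᶠ t in 𝓝[<] (1:ℝ), F t < 0 :=
        tendF.eventually (eventually_lt_nhds hLneg)
      have hFneg2 : ∀ᶠ t in 𝓝[<] (1:ℝ), F t < 0 ∧ t ∈ Ioo (0:ℝ) 1 :=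
        hFneg.and (Ioo_mem_nhdsLT_of_mem (show (1:ℝ) ∈ Ioc (0:ℝ) 1 by constructor <;> norm_num))
      obtain ⟨l, hl, hsub⟩ := mem_nhdsLT_iff_exists_Ioo_subset.mp hFneg2
      set t₁ : ℝ := max l (1/2) with ht₁
      have ht₁lt : t₁ < 1 := max_lt hl (by norm_num)
      have ht₁pos : 0 < t₁ := lt_of_lt_of_le (by norm_num) (le_max_right l (1/2))
      obtain ⟨c, hc, hceq⟩ := exists_hasDerivAt_eq_slope ψ F ht₁lt
        (hψcont.mono (Icc_subset_Icc (le_of_lt ht₁pos) le_rfl))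
        (fun x hx => hψd x ⟨lt_trans ht₁pos hx.1, hx.2⟩)
      have hcin : c ∈ Ioo l 1 := ⟨lt_of_le_of_lt (le_max_left l (1/2)) hc.1, hc.2⟩
      have hFc_neg : F c < 0 := (hsub hcin).1
      have hψ1 : ψ 1 = h x₀ := by simp [hψdef]
      have hψt₁le : ψ t₁ ≤ ψ 1 := by
        rw [hψ1]
        exact hx₀max' _ (hmemcb t₁ (le_of_lt ht₁pos) (le_of_lt ht₁lt))
      have hFc_nonneg : 0 ≤ F c := by
        rw [hceq]
        apply div_nonneg (by linarith) (by linarith)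
      linarith
    -- conclude
    have hCS : ⟪g x₀, x₀⟫ ≤ ‖g x₀‖ := by
      have := real_inner_le_norm (g x₀) x₀
      rwa [hsphere, mul_one] at this
    have : 1 - 2*ε ≤ ‖g x₀‖ := by linarith
    exact le_trans this (le_csSup hbdd ⟨x₀, hx₀mem, rfl⟩)
  by_contra hcon
  push_neg at hcon
  have hε : (0:ℝ) < (1 - M)/4 := by linarith
  have hε2 : (1 - M)/4 < 1/2 := by linarith
  have := key _ hε hε2
  linarith
end AuxLemmas

set_option maxHeartbeats 1000000 in
/-- For N ≥ 3, u(x) = (N/(2(N−2)))(x₁²+⋯+x_{N−1}²−x_N²) satisfies Δu = N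
on B(0,1) and ‖∇u‖ = N/(N−2) on the unit sphere, yet λ₁(B(0,1)) = 1 ≠ N/(N−2): so u has
‖∇u‖ constant on the boundary but is not a minimizer. -/
theorem not_minimizer_with_constant_boundary_gradient (N : ℕ) (hN : 3 ≤ N) :
    let j : Fin N := ⟨N - 1, by omega⟩
    let u : Euc N → ℝ := fun x =>
      ((N : ℝ) / (2 * ((N : ℝ) - 2))) * ∑ i : Fin N, (if i = j then (-1 : ℝ) else 1) * x i ^ 2
    (∀ x ∈ ball (0 : Euc N) 1, lap u x = N) ∧
    (∀ x : Euc N, ‖x‖ = 1 → ‖gradient u x‖ = (N : ℝ) / ((N : ℝ) - 2)) ∧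
    lambda1 N (ball (0 : Euc N) 1) = 1 ∧ (N : ℝ) / ((N : ℝ) - 2) ≠ 1 := by
  intro j u
  have hN3 : (3:ℝ) ≤ (N:ℝ) := by exact_mod_cast hN
  have hden : (0:ℝ) < (N:ℝ) - 2 := by linarith
  set c : ℝ := (N:ℝ) / (2 * ((N:ℝ) - 2)) with hc
  have hcpos : 0 < c := div_pos (by linarith) (by linarith)
  have hu_eq : u = fun x : Euc N => c * ∑ i : Fin N, (if i = j then (-1 : ℝ) else 1) * x i ^ 2 :=
    rfl
  set G : Euc N →L[ℝ] (Euc N →L[ℝ] ℝ) :=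
    (2*c) • gid N - (4*c) • ((EuclideanSpace.proj j).smulRight (EuclideanSpace.proj j)) with hG
  have hG_apply : ∀ v w : Euc N, G v w = 2*c*(∑ i, v i * w i) - 4*c*(v j * w j) := by
    intro v w
    simp only [hG, ContinuousLinearMap.sub_apply, ContinuousLinearMap.smul_apply,
      ContinuousLinearMap.smulRight_apply, PiLp.proj_apply, smul_eq_mul, gid_apply]
  -- the derivative of u
  have hdu : ∀ x : Euc N, HasFDerivAt u (G x) x := by
    intro x
    have hterm : ∀ i : Fin N, HasFDerivAt
        (fun y : Euc N => (if i = j then (-1:ℝ) else 1) * y i ^ 2)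
        ((if i = j then (-1:ℝ) else 1) • ((2 * x i) • EuclideanSpace.proj (𝕜 := ℝ) i)) x := by
      intro i
      have hp : HasFDerivAt (fun y : Euc N => y i) (EuclideanSpace.proj (𝕜 := ℝ) i) x :=
        (EuclideanSpace.proj (𝕜 := ℝ) i).hasFDerivAt
      have h2 : HasFDerivAt (fun y : Euc N => y i ^ 2)
          ((2 * x i) • EuclideanSpace.proj (𝕜 := ℝ) i) x := by
        have := hp.mul hp
        refine HasFDerivAt.congr_of_eventuallyEq (this.congr_fderiv ?_) (Filter.Eventually.of_forall fun y => ?_)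
        · ext w
          simp only [ContinuousLinearMap.smul_apply, ContinuousLinearMap.add_apply,
            PiLp.proj_apply, smul_eq_mul]
          ring
        · simp [sq]
      exact h2.const_mul _
    have hsum := (HasFDerivAt.sum (fun i (_ : i ∈ Finset.univ) => hterm i)).const_mul c
    rw [hu_eq]
    refine (hsum.congr_fderiv (Eq.symm ?_)).congr_of_eventuallyEq (Filter.Eventually.of_forall fun y => ?_)
    ext w
    rw [hG_apply]
    simp only [ContinuousLinearMap.smul_apply, ContinuousLinearMap.sum_apply, smul_eq_mul,
      PiLp.proj_apply]
    have hid : ∀ i : Fin N, (if i = j then (-1:ℝ) else 1) * (2 * x i * w i)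
        = 2 * (x i * w i) - (if i = j then 4 * (x i * w i) else 0) := by
      intro i; split <;> ring
    calc 2*c*(∑ i, x i * w i) - 4*c*(x j * w j)
        = c * ∑ i : Fin N, (2 * (x i * w i) - (if i = j then 4 * (x i * w i) else 0)) := by
          rw [Finset.sum_sub_distrib, Finset.sum_ite_eq' Finset.univ j
            (fun i => 4 * (x i * w i)), if_pos (Finset.mem_univ j), ← Finset.mul_sum]
          ring
      _ = ∑ i : Fin N, c * ((if i = j then (-1:ℝ) else 1) * (2 * x i * w i)) := by
          rw [Finset.mul_sum]
          exact Finset.sum_congr rfl fun i _ => by rw [hid i]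
      _ = c * ∑ i : Fin N, (if i = j then (-1:ℝ) else 1) * (2 * x i * w i) := by
          rw [Finset.mul_sum]
    simp [Finset.sum_apply]
  have hfderiv_u : fderiv ℝ u = ⇑G := funext fun y => (hdu y).fderiv
  have hGe : ∀ i : Fin N, G (EuclideanSpace.single i 1) (EuclideanSpace.single i 1)
      = 2*c - 4*c*(if i = j then 1 else 0) := by
    intro i
    rw [hG_apply]
    have h1 : ∑ k, (EuclideanSpace.single i 1 : Euc N) k *
        (EuclideanSpace.single i 1 : Euc N) k = 1 := by
      simp [EuclideanSpace.single_apply]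
    rw [h1]
    have h2 : (EuclideanSpace.single i 1 : Euc N) j * (EuclideanSpace.single i 1 : Euc N) j
        = (if i = j then 1 else 0) := by
      rcases eq_or_ne i j with hij | hij
      · subst hij; simp [EuclideanSpace.single_apply]
      · rw [EuclideanSpace.single_apply, if_neg (Ne.symm hij), if_neg hij, mul_zero]
    rw [h2]
    ring
  have hlapu : ∀ x : Euc N, lap u x = N := by
    intro x
    unfold lap
    rw [hfderiv_u]
    have : fderiv ℝ (⇑G) x = G := G.fderiv
    rw [this]
    calc ∑ i : Fin N, G (EuclideanSpace.single i 1) (EuclideanSpace.single i 1)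
        = ∑ i : Fin N, (2*c - 4*c*(if i = j then 1 else 0)) :=
          Finset.sum_congr rfl fun i _ => hGe i
      _ = N * (2*c) - 4*c := by
          rw [Finset.sum_sub_distrib]
          rw [Finset.sum_const, Finset.card_univ, Fintype.card_fin, nsmul_eq_mul]
          congr 1
          rw [← Finset.mul_sum, Finset.sum_ite_eq' Finset.univ j (fun _ => (1:ℝ)),
            if_pos (Finset.mem_univ j), mul_one]
      _ = N := by
          have hD : (2*((N:ℝ)-2)) ≠ 0 := by positivity
          have hcancel : c * (2*((N:ℝ)-2)) = N := by rw [hc]; exact div_mul_cancel₀ _ hD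
          linear_combination hcancel
  refine ⟨fun x _ => hlapu x, ?_, ?_, ?_⟩
  · -- gradient on the sphere
    intro x hx
    set d : Euc N := (2*c) • x - (4*c*(x j)) • EuclideanSpace.single j 1 with hd
    have htd : (InnerProductSpace.toDual ℝ (Euc N)) d = G x := by
      ext w
      rw [InnerProductSpace.toDual_apply_apply, hG_apply]
      rw [PiLp.inner_apply]
      simp only [RCLike.inner_apply, conj_trivial]
      rw [Finset.sum_congr rfl fun i _ => mul_comm (w i) (d i)]
      have hcomp : ∀ i : Fin N, d i = 2*c*(x i) - 4*c*(x j)*(if i = j then 1 else 0) := by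
        intro i
        rw [hd]
        simp [EuclideanSpace.single_apply, PiLp.smul_apply, PiLp.sub_apply, smul_eq_mul]
      calc ∑ i, d i * w i
          = ∑ i, (2*c*(x i * w i) - (if i = j then 4*c*(x j * w i) else 0)) := by
            refine Finset.sum_congr rfl fun i _ => ?_
            rw [hcomp i]
            split <;> ring
        _ = 2*c*(∑ i, x i * w i) - 4*c*(x j * w j) := by
            rw [Finset.sum_sub_distrib, Finset.sum_ite_eq' Finset.univ j
              (fun i => 4*c*(x j * w i))]
            simp [Finset.mul_sum]
    have hgradAt : HasGradientAt u d x :=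
      hasGradientAt_iff_hasFDerivAt.mpr (by rw [htd]; exact hdu x)
    rw [hgradAt.gradient]
    have hs1 : ∑ i, (x i) ^ 2 = 1 := by
      have := EuclideanSpace.norm_eq x
      rw [hx] at this
      have h2 : ∑ i, ‖x i‖ ^ 2 = 1 := Real.sqrt_eq_one.mp this.symm
      simpa [Real.norm_eq_abs, sq_abs] using h2
    have hnorm : ∀ i : Fin N, ‖d i‖^2 = (2*c)^2 * (x i)^2 := by
      intro i
      have hcomp : d i = 2*c*(x i) - 4*c*(x j)*(if i = j then 1 else 0) := by
        rw [hd]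
        simp [EuclideanSpace.single_apply, PiLp.smul_apply, PiLp.sub_apply, smul_eq_mul]
      rw [Real.norm_eq_abs, sq_abs, hcomp]
      split
      · rename_i hij
        rw [hij]
        ring
      · ring
    rw [EuclideanSpace.norm_eq]
    have : ∑ i, ‖d i‖^2 = (2*c)^2 := by
      rw [Finset.sum_congr rfl fun i _ => hnorm i, ← Finset.mul_sum, hs1, mul_one]
    rw [this]
    rw [Real.sqrt_sq (by positivity)]
    have hD : (2*((N:ℝ)-2)) ≠ 0 := by positivity
    have hcancel : c * (2*((N:ℝ)-2)) = N := by rw [hc]; exact div_mul_cancel₀ _ hD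
    rw [eq_div_iff (ne_of_gt hden)]
    linear_combination hcancel
  · -- lambda1 = 1
    have hclos : closure (ball (0 : Euc N) 1) = closedBall 0 1 :=
      closure_ball 0 one_ne_zero
    have hbdd : BddAbove ((fun x : Euc N => ‖x‖) '' closedBall 0 1) :=
      (isCompact_closedBall _ _).bddAbove_image continuous_norm.continuousOn
    have hsup : sSup ((fun x : Euc N => ‖x‖) '' closure (ball (0 : Euc N) 1)) = 1 := by
      rw [hclos]
      apply le_antisymm
      · refine csSup_le ⟨‖(0:Euc N)‖, ⟨0, by simp, rfl⟩⟩ ?_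
        rintro y ⟨z, hz, rfl⟩
        exact mem_closedBall_zero_iff.mp hz
      · apply le_csSup hbdd
        refine ⟨EuclideanSpace.single j 1, ?_, ?_⟩
        · rw [mem_closedBall_zero_iff, EuclideanSpace.norm_single]
          simp
        · simp [EuclideanSpace.norm_single]
    -- the witness u₀
    set u₀ : Euc N → ℝ := fun x => (1/2 : ℝ) * ∑ i, x i ^ 2 with hu₀
    have hdu₀ : ∀ x : Euc N, HasFDerivAt u₀ (gid N x) x := by
      intro x
      have h1 := (hasFDerivAt_sqsum x).const_mul (1/2 : ℝ)
      have h2 : (1/2 : ℝ) • ((2:ℝ) • gid N x) = gid N x := by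
        rw [smul_smul]; norm_num
      rwa [h2] at h1
    have htd₀ : ∀ x : Euc N, (InnerProductSpace.toDual ℝ (Euc N)) x = gid N x := by
      intro x
      ext w
      rw [InnerProductSpace.toDual_apply_apply, PiLp.inner_apply, gid_apply]
      simp [RCLike.inner_apply, conj_trivial]
      exact Finset.sum_congr rfl fun i _ => mul_comm _ _
    have hcd₀ : ContDiff ℝ 2 u₀ :=
      contDiff_const.mul (ContDiff.sum fun i _ => by fun_prop)
    have hmem : (1:ℝ) ∈ { r : ℝ | ∃ (u : Euc N → ℝ) (g : Euc N → Euc N),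
        C1OnClosure (ball (0 : Euc N) 1) u g ∧ ContDiffOn ℝ 2 u (ball (0 : Euc N) 1) ∧
        (∀ x ∈ ball (0 : Euc N) 1, lap u x = N) ∧
        r = sSup ((fun x => ‖g x‖) '' closure (ball (0 : Euc N) 1)) } := by
      refine ⟨u₀, fun x => x, ⟨hcd₀.continuous.continuousOn, continuous_id.continuousOn,
        fun x _ => hasGradientAt_iff_hasFDerivAt.mpr (by rw [htd₀ x]; exact hdu₀ x)⟩,
        hcd₀.contDiffOn, fun x _ => ?_, hsup.symm⟩
      unfold lap
      have hf₀ : fderiv ℝ u₀ = ⇑(gid N) := funext fun y => (hdu₀ y).fderiv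
      rw [hf₀, (gid N).fderiv]
      have : ∀ i : Fin N, gid N (EuclideanSpace.single i 1 : Euc N)
          (EuclideanSpace.single i 1 : Euc N) = 1 := by
        intro i
        rw [gid_apply]
        simp [EuclideanSpace.single_apply]
      rw [Finset.sum_congr rfl fun i _ => this i]
      simp
    have hlb : ∀ r ∈ { r : ℝ | ∃ (u : Euc N → ℝ) (g : Euc N → Euc N),
        C1OnClosure (ball (0 : Euc N) 1) u g ∧ ContDiffOn ℝ 2 u (ball (0 : Euc N) 1) ∧
        (∀ x ∈ ball (0 : Euc N) 1, lap u x = N) ∧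
        r = sSup ((fun x => ‖g x‖) '' closure (ball (0 : Euc N) 1)) }, (1:ℝ) ≤ r := by
      rintro r ⟨u', g', hC1, hC2, hlap', rfl⟩
      exact lower_bound (by omega) u' g' hC1 hC2 hlap'
    unfold lambda1
    exact le_antisymm (csInf_le ⟨1, fun r hr => hlb r hr⟩ hmem)
      (le_csInf ⟨1, hmem⟩ hlb)
  · -- N/(N-2) ≠ 1
    intro hcontra
    rw [div_eq_one_iff_eq (ne_of_gt hden)] at hcontra
    linarith
end

section
/- Let N ≥ 3, 0 < r < R, and Ω = B(0,R) \ closure(B(0,r)) be the spherical shell in ℝ^N. Then the function u(x) = ‖x‖²/2 + ((R+r)/((N−2)(R^{1−N}+r^{1−N}))) ‖x‖^{2−N} satisfies Δu = N on Ω and ∇u = c n on ∂Ω, where n is the outward unit normal and c = (R^N − r^N)/(R^{N−1} + r^{N−1}); consequently λ₁(Ω) = (R^N − r^N)/(R^{N−1} + r^{N−1}). -/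
open MeasureTheory Metric Set Bornology
open scoped Topology RealInnerProductSpace ENNReal NNReal

noncomputable section Shell18Aux

open Metric Set
open scoped Topology RealInnerProductSpace

namespace Shell18

variable {N : ℕ}

lemma hq (x : Euc N) : HasFDerivAt (fun y : Euc N => ⟪y, y⟫) ((2:ℝ) • innerSL ℝ x) x := by
  have h := (hasFDerivAt_id x).inner ℝ (hasFDerivAt_id x)
  refine h.congr_fderiv ?_
  ext v
  simp [real_inner_comm, two_smul]

lemma qpos {x : Euc N} (hx : x ≠ 0) : (0:ℝ) < ⟪x, x⟫ := by
  rw [real_inner_self_eq_norm_sq]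
  have : ‖x‖ ≠ 0 := norm_ne_zero_iff.mpr hx
  positivity

lemma bridge {t : ℝ} (ht : 0 < t) (k : ℤ) : (t^2) ^ (((k:ℝ))/2) = t ^ k := by
  rw [← Real.rpow_natCast t 2, ← Real.rpow_mul ht.le,
    show ((2:ℕ):ℝ) * ((k:ℝ)/2) = (k:ℝ) by push_cast; ring, Real.rpow_intCast]

/-- the model function `uA` and its gradient field `gA`. -/
def uA (N : ℕ) (A : ℝ) : Euc N → ℝ := fun x =>
  ‖x‖ ^ 2 / 2 + A * ‖x‖ ^ ((2:ℤ) - (N:ℤ))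

def gA (N : ℕ) (A : ℝ) : Euc N → Euc N := fun x =>
  (1 + A * (2 - (N:ℝ)) * ‖x‖ ^ (-(N:ℤ))) • x

lemma uA_eventually_eq {A : ℝ} {x : Euc N} (hx : x ≠ 0) :
    uA N A =ᶠ[𝓝 x] (fun y => ⟪y, y⟫ / 2 + A * ⟪y, y⟫ ^ ((((2:ℤ) - (N:ℤ) : ℤ):ℝ)/2)) := by
  filter_upwards [isOpen_compl_singleton.mem_nhds (by simpa using hx)] with y hy
  have hy0 : y ≠ 0 := hy
  have hny : (0:ℝ) < ‖y‖ := norm_pos_iff.mpr hy0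
  simp only [uA, real_inner_self_eq_norm_sq, bridge hny]

lemma model_grad (A : ℝ) {x : Euc N} (hx : x ≠ 0) :
    HasGradientAt (uA N A) (gA N A x) x := by
  have hnx : (0:ℝ) < ‖x‖ := norm_pos_iff.mpr hx
  set p : ℝ := (((2:ℤ) - (N:ℤ) : ℤ):ℝ)/2 with hp
  have hqx : (0:ℝ) < ⟪x, x⟫ := qpos hx
  have hψ : HasDerivAt (fun s : ℝ => s / 2 + A * s ^ p)
      (1/2 + A * (p * ⟪x, x⟫ ^ (p - 1))) ⟪x, x⟫ := by
    exact ((hasDerivAt_id _).div_const 2).add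
      ((Real.hasDerivAt_rpow_const (Or.inl hqx.ne')).const_mul A)
  have hv : HasFDerivAt (fun y : Euc N => ⟪y, y⟫ / 2 + A * ⟪y, y⟫ ^ p)
      ((1/2 + A * (p * ⟪x, x⟫ ^ (p - 1))) • ((2:ℝ) • innerSL ℝ x)) x := by
    exact HasDerivAt.comp_hasFDerivAt (f := fun y : Euc N => ⟪y, y⟫) x hψ (hq x)
  have key : (1 + A * (2 - (N:ℝ)) * ‖x‖ ^ (-(N:ℤ))) = (1/2 + A * (p * ⟪x, x⟫ ^ (p - 1))) * 2 := by
    have h1 : ⟪x, x⟫ ^ (p - 1) = ‖x‖ ^ (-(N:ℤ)) := by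
      have : p - 1 = ((-(N:ℤ) : ℤ):ℝ)/2 := by rw [hp]; push_cast; ring
      rw [this, real_inner_self_eq_norm_sq, bridge hnx]
    rw [h1, hp]; push_cast; ring
  have hG : HasGradientAt (fun y : Euc N => ⟪y, y⟫ / 2 + A * ⟪y, y⟫ ^ p) (gA N A x) x := by
    rw [hasGradientAt_iff_hasFDerivAt]
    refine hv.congr_fderiv ?_
    ext v
    simp only [InnerProductSpace.toDual_apply_apply, gA, inner_smul_left, conj_trivial,
      ContinuousLinearMap.coe_smul', Pi.smul_apply, innerSL_apply_apply, smul_eq_mul]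
    rw [key]; ring
  exact hG.congr_of_eventuallyEq (uA_eventually_eq hx)

lemma model_fderiv_apply (A : ℝ) {y : Euc N} (hy : y ≠ 0) (v : Euc N) :
    fderiv ℝ (uA N A) y v = (1 + A * (2 - (N:ℝ)) * ‖y‖ ^ (-(N:ℤ))) * ⟪y, v⟫ := by
  rw [(model_grad A hy).hasFDerivAt.fderiv]
  simp [InnerProductSpace.toDual_apply_apply, gA, inner_smul_left]

lemma model_contDiffAt (A : ℝ) {x : Euc N} (hx : x ≠ 0) : ContDiffAt ℝ 2 (uA N A) x := by
  have hqx : (0:ℝ) < ⟪x, x⟫ := qpos hx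
  set p : ℝ := (((2:ℤ) - (N:ℤ) : ℤ):ℝ)/2 with hp
  have hqc : ContDiffAt ℝ 2 (fun y : Euc N => ⟪y, y⟫) x :=
    (contDiff_id.inner ℝ contDiff_id).contDiffAt
  have hrpow : ContDiffAt ℝ 2 (fun s : ℝ => s ^ p) ⟪x, x⟫ :=
    Real.contDiffAt_rpow_const_of_ne hqx.ne'
  have hcomp : ContDiffAt ℝ 2 (fun y : Euc N => ⟪y, y⟫ ^ p) x := ContDiffAt.comp (f := fun y : Euc N => ⟪y, y⟫) (g := fun s : ℝ => s ^ p) x hrpow hqc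
  have : ContDiffAt ℝ 2 (fun y : Euc N => ⟪y, y⟫ / 2 + A * ⟪y, y⟫ ^ p) x :=
    (hqc.div_const 2).add (contDiffAt_const.mul hcomp)
  exact this.congr_of_eventuallyEq (uA_eventually_eq hx)

end Shell18

namespace Shell18

variable {N : ℕ}

lemma sum_sq (x : Euc N) : ∑ i, (x i)^2 = ‖x‖^2 := by
  rw [EuclideanSpace.norm_eq, Real.sq_sqrt (by positivity)]
  exact Finset.sum_congr rfl fun i _ => by rw [Real.norm_eq_abs, sq_abs]

lemma model_kappa (A : ℝ) {x : Euc N} (hx : x ≠ 0) :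
    HasFDerivAt (fun y : Euc N => 1 + A * (2 - (N:ℝ)) * ‖y‖ ^ (-(N:ℤ)))
      ((A * (2 - (N:ℝ)) * (((-(N:ℤ) : ℤ):ℝ)/2 * ⟪x, x⟫ ^ ((((-(N:ℤ) : ℤ):ℝ)/2) - 1))) •
        ((2:ℝ) • innerSL ℝ x)) x := by
  set p' : ℝ := ((-(N:ℤ) : ℤ):ℝ)/2 with hp'
  have hqx : (0:ℝ) < ⟪x, x⟫ := qpos hx
  have hψ : HasDerivAt (fun s : ℝ => 1 + A * (2 - (N:ℝ)) * s ^ p')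
      (A * (2 - (N:ℝ)) * (p' * ⟪x, x⟫ ^ (p' - 1))) ⟪x, x⟫ :=
    (((Real.hasDerivAt_rpow_const (Or.inl hqx.ne')).const_mul (A * (2 - (N:ℝ)))).const_add 1)
  have hv := HasDerivAt.comp_hasFDerivAt (f := fun y : Euc N => ⟪y, y⟫) x hψ (hq x)
  apply hv.congr_of_eventuallyEq
  filter_upwards [isOpen_compl_singleton.mem_nhds (by simpa using hx)] with y hy
  have hny : (0:ℝ) < ‖y‖ := norm_pos_iff.mpr (by exact hy)
  simp only [Function.comp, real_inner_self_eq_norm_sq, hp', bridge hny]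

lemma model_lap (A : ℝ) {x : Euc N} (hx : x ≠ 0) : lap (uA N A) x = N := by
  classical
  have hnx : (0:ℝ) < ‖x‖ := norm_pos_iff.mpr hx
  have hqx : (0:ℝ) < ⟪x, x⟫ := qpos hx
  set C := A * (2 - (N:ℝ)) with hC
  set p' : ℝ := ((-(N:ℤ) : ℤ):ℝ)/2 with hp'
  set E : Fin N → Euc N := fun i => EuclideanSpace.single i (1:ℝ) with hE
  set κ : Euc N → ℝ := fun y => 1 + C * ‖y‖ ^ (-(N:ℤ)) with hκ
  have hd2 : DifferentiableAt ℝ (fderiv ℝ (uA N A)) x :=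
    ((model_contDiffAt A hx).fderiv_right (m := 1) (by norm_num)).differentiableAt (by norm_num)
  have hstep : ∀ i : Fin N, fderiv ℝ (fderiv ℝ (uA N A)) x (E i) (E i)
      = κ x + (C * (p' * ⟪x, x⟫ ^ (p' - 1)) * 2) * (x i)^2 := by
    intro i
    have h1 : fderiv ℝ (fun y => fderiv ℝ (uA N A) y (E i)) x
        = (fderiv ℝ (fderiv ℝ (uA N A)) x).flip (E i) := by
      have h := (hd2.hasFDerivAt.clm_apply (hasFDerivAt_const (E i) x)).fderiv
      rw [h]; ext v; simp
    have h2 : (fun y => fderiv ℝ (uA N A) y (E i)) =ᶠ[𝓝 x] (fun y => κ y * (y i)) := by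
      filter_upwards [isOpen_compl_singleton.mem_nhds (by simpa using hx)] with y hy
      rw [model_fderiv_apply A (by exact hy) (E i)]
      simp [hκ, hE, EuclideanSpace.inner_single_right, hC]
    have h3 : HasFDerivAt (fun y : Euc N => κ y * (y i))
        ((κ x) • (EuclideanSpace.proj (𝕜 := ℝ) i) +
          (x i) • ((C * (p' * ⟪x, x⟫ ^ (p' - 1))) • ((2:ℝ) • innerSL ℝ x))) x :=
      HasFDerivAt.mul (by exact model_kappa A hx) ((EuclideanSpace.proj (𝕜 := ℝ) i).hasFDerivAt)
    have h4 : fderiv ℝ (fun y => fderiv ℝ (uA N A) y (E i)) x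
        = (κ x) • (EuclideanSpace.proj (𝕜 := ℝ) i) +
          (x i) • ((C * (p' * ⟪x, x⟫ ^ (p' - 1))) • ((2:ℝ) • innerSL ℝ x)) := by
      rw [h2.fderiv_eq, h3.fderiv]
    have h5 := congrArg (fun (L : Euc N →L[ℝ] ℝ) => L (E i)) h4
    rw [h1] at h5
    simp only [ContinuousLinearMap.flip_apply] at h5
    rw [h5]
    have hEi : (E i) i = 1 := by simp [hE]
    have hinner : ⟪x, E i⟫ = x i := by simp [hE, EuclideanSpace.inner_single_right]
    simp only [ContinuousLinearMap.add_apply, ContinuousLinearMap.coe_smul', Pi.smul_apply,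
      PiLp.proj_apply, innerSL_apply_apply, smul_eq_mul, hEi, hinner]
    ring
  have hT : ⟪x, x⟫ ^ p' = ‖x‖ ^ (-(N:ℤ)) := by
    rw [real_inner_self_eq_norm_sq, bridge hnx]
  have hq1 : ⟪x, x⟫ ^ (p' - 1) * ‖x‖^2 = ⟪x, x⟫ ^ p' := by
    rw [← real_inner_self_eq_norm_sq, Real.rpow_sub hqx, Real.rpow_one, div_mul_cancel₀]
    exact hqx.ne'
  have hp2 : 2 * p' = -(N:ℝ) := by rw [hp']; push_cast; ring
  simp only [lap]
  have : ∑ i : Fin N, fderiv ℝ (fderiv ℝ (uA N A)) x (EuclideanSpace.single i 1)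
      (EuclideanSpace.single i 1) = ∑ i : Fin N, (κ x + (C * (p' * ⟪x, x⟫ ^ (p' - 1)) * 2) * (x i)^2) := by
    refine Finset.sum_congr rfl fun i _ => ?_
    exact hstep i
  rw [this, Finset.sum_add_distrib, Finset.sum_const, ← Finset.mul_sum, sum_sq,
    Finset.card_univ, Fintype.card_fin]
  have h6 : (C * (p' * ⟪x, x⟫ ^ (p' - 1)) * 2) * ‖x‖^2 = 2 * C * p' * (⟪x, x⟫ ^ (p' - 1) * ‖x‖^2) := by ring
  rw [nsmul_eq_mul, h6, hq1, hT, hκ]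
  simp only []
  rw [← hT]
  linear_combination (C * ⟪x, x⟫ ^ p') * hp2

end Shell18

namespace Shell18

variable {N : ℕ}

section Algebra
variable {r R : ℝ}

/-- outer boundary coefficient identity -/
lemma key_outer (hN : 3 ≤ N) (hr : 0 < r) (hrR : r < R) :
    1 + ((R + r) / (((N : ℝ) - 2) * (R ^ ((1 : ℤ) - (N : ℤ)) + r ^ ((1 : ℤ) - (N : ℤ))))) *
      (2 - (N:ℝ)) * R ^ (-(N:ℤ))
    = ((R ^ N - r ^ N) / (R ^ (N - 1) + r ^ (N - 1))) / R := by
  have hR : 0 < R := hr.trans hrR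
  have hN3 : (3:ℝ) ≤ (N:ℝ) := by exact_mod_cast hN
  have hRN : (0:ℝ) < R ^ N := by positivity
  have hrN : (0:ℝ) < r ^ N := by positivity
  have e1 : R ^ ((1:ℤ) - (N:ℤ)) = R / R ^ N := by
    rw [zpow_sub₀ hR.ne', zpow_one, zpow_natCast]
  have e2 : r ^ ((1:ℤ) - (N:ℤ)) = r / r ^ N := by
    rw [zpow_sub₀ hr.ne', zpow_one, zpow_natCast]
  have e3 : R ^ (-(N:ℤ)) = (R ^ N)⁻¹ := by rw [zpow_neg, zpow_natCast]
  have e5 : R ^ (N - 1) = R ^ N / R := by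
    rw [eq_div_iff hR.ne', ← pow_succ]; congr 1; omega
  have e6 : r ^ (N - 1) = r ^ N / r := by
    rw [eq_div_iff hr.ne', ← pow_succ]; congr 1; omega
  have hd1 : R / R ^ N + r / r ^ N > 0 := by positivity
  have hd2 : R ^ N / R + r ^ N / r > 0 := by positivity
  have hN2 : (N:ℝ) - 2 ≠ 0 := by linarith
  rw [e1, e2, e3, e5, e6]
  field_simp
  ring

/-- inner boundary coefficient identity -/
lemma key_inner (hN : 3 ≤ N) (hr : 0 < r) (hrR : r < R) :
    1 + ((R + r) / (((N : ℝ) - 2) * (R ^ ((1 : ℤ) - (N : ℤ)) + r ^ ((1 : ℤ) - (N : ℤ))))) *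
      (2 - (N:ℝ)) * r ^ (-(N:ℤ))
    = -(((R ^ N - r ^ N) / (R ^ (N - 1) + r ^ (N - 1))) / r) := by
  have hR : 0 < R := hr.trans hrR
  have hN3 : (3:ℝ) ≤ (N:ℝ) := by exact_mod_cast hN
  have hRN : (0:ℝ) < R ^ N := by positivity
  have hrN : (0:ℝ) < r ^ N := by positivity
  have e1 : R ^ ((1:ℤ) - (N:ℤ)) = R / R ^ N := by
    rw [zpow_sub₀ hR.ne', zpow_one, zpow_natCast]
  have e2 : r ^ ((1:ℤ) - (N:ℤ)) = r / r ^ N := by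
    rw [zpow_sub₀ hr.ne', zpow_one, zpow_natCast]
  have e3 : r ^ (-(N:ℤ)) = (r ^ N)⁻¹ := by rw [zpow_neg, zpow_natCast]
  have e5 : R ^ (N - 1) = R ^ N / R := by
    rw [eq_div_iff hR.ne', ← pow_succ]; congr 1; omega
  have e6 : r ^ (N - 1) = r ^ N / r := by
    rw [eq_div_iff hr.ne', ← pow_succ]; congr 1; omega
  have hd1 : R / R ^ N + r / r ^ N > 0 := by positivity
  have hd2 : R ^ N / R + r ^ N / r > 0 := by positivity
  have hN2 : (N:ℝ) - 2 ≠ 0 := by linarith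
  rw [e1, e2, e3, e5, e6]
  field_simp
  ring

end Algebra
end Shell18

namespace Shell18

variable {N : ℕ} {r R : ℝ}

lemma zpow_conv {t : ℝ} (hN : 3 ≤ N) (ht : 0 < t) :
    t ^ ((1:ℤ) - (N:ℤ)) = (t ^ (N - 1))⁻¹ := by
  rw [show (1:ℤ) - (N:ℤ) = -((N - 1 : ℕ):ℤ) by push_cast [Nat.cast_sub (by omega : 1 ≤ N)]; ring,
    zpow_neg, zpow_natCast]

lemma A_pos (hN : 3 ≤ N) (hr : 0 < r) (hrR : r < R) :
    0 < (R + r) / (((N : ℝ) - 2) * (R ^ ((1 : ℤ) - (N : ℤ)) + r ^ ((1 : ℤ) - (N : ℤ)))) := by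
  have hR : 0 < R := hr.trans hrR
  have hN3 : (3:ℝ) ≤ (N:ℝ) := by exact_mod_cast hN
  have h1 : (0:ℝ) < R ^ ((1:ℤ) - (N:ℤ)) := zpow_pos hR _
  have h2 : (0:ℝ) < r ^ ((1:ℤ) - (N:ℤ)) := zpow_pos hr _
  apply div_pos (by linarith) (mul_pos (by linarith) (by linarith))

lemma c_pos (hN : 3 ≤ N) (hr : 0 < r) (hrR : r < R) :
    0 < (R ^ N - r ^ N) / (R ^ (N - 1) + r ^ (N - 1)) := by
  have hR : 0 < R := hr.trans hrR
  have : r ^ N < R ^ N := pow_lt_pow_left₀ hrR hr.le (by omega)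
  have h2 : (0:ℝ) < R ^ (N-1) := by positivity
  have h3 : (0:ℝ) < r ^ (N-1) := by positivity
  apply div_pos (by linarith) (by linarith)

lemma V_mono (hN : 3 ≤ N) {A s t : ℝ} (hA : 0 < A) (hs : 0 < s) (hst : s ≤ t) :
    s + A * (2 - (N:ℝ)) * s ^ ((1:ℤ) - (N:ℤ)) ≤ t + A * (2 - (N:ℝ)) * t ^ ((1:ℤ) - (N:ℤ)) := by
  have ht : 0 < t := hs.trans_le hst
  have hN3 : (3:ℝ) ≤ (N:ℝ) := by exact_mod_cast hN
  have hmono : t ^ ((1:ℤ) - (N:ℤ)) ≤ s ^ ((1:ℤ) - (N:ℤ)) := by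
    rw [zpow_conv hN hs, zpow_conv hN ht]
    exact inv_anti₀ (by positivity) (pow_le_pow_left₀ hs.le hst _)
  have hcoef : A * (2 - (N:ℝ)) ≤ 0 := mul_nonpos_of_nonneg_of_nonpos hA.le (by linarith)
  nlinarith [mul_nonneg (neg_nonneg.mpr hcoef) (sub_nonneg.mpr hmono)]

/-- the fundamental sup-bound: `|κ(ρ) ρ| ≤ c` on `[r, R]`. -/
lemma norm_bound (hN : 3 ≤ N) (hr : 0 < r) (hrR : r < R) {ρ : ℝ} (h1 : r ≤ ρ) (h2 : ρ ≤ R) :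
    |(1 + ((R + r) / (((N : ℝ) - 2) * (R ^ ((1 : ℤ) - (N : ℤ)) + r ^ ((1 : ℤ) - (N : ℤ))))) *
        (2 - (N:ℝ)) * ρ ^ (-(N:ℤ))) * ρ|
      ≤ (R ^ N - r ^ N) / (R ^ (N - 1) + r ^ (N - 1)) := by
  have hρ : 0 < ρ := hr.trans_le h1
  have hR : 0 < R := hr.trans hrR
  set A := (R + r) / (((N : ℝ) - 2) * (R ^ ((1 : ℤ) - (N : ℤ)) + r ^ ((1 : ℤ) - (N : ℤ)))) with hA
  set c := (R ^ N - r ^ N) / (R ^ (N - 1) + r ^ (N - 1)) with hc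
  have hVform : ∀ t : ℝ, 0 < t →
      (1 + A * (2 - (N:ℝ)) * t ^ (-(N:ℤ))) * t = t + A * (2 - (N:ℝ)) * t ^ ((1:ℤ) - (N:ℤ)) := by
    intro t ht
    have : t ^ (-(N:ℤ)) * t = t ^ ((1:ℤ) - (N:ℤ)) := by
      rw [show (1:ℤ) - (N:ℤ) = -(N:ℤ) + 1 by ring, zpow_add₀ ht.ne', zpow_one]
    calc (1 + A * (2 - (N:ℝ)) * t ^ (-(N:ℤ))) * t
        = t + A * (2 - (N:ℝ)) * (t ^ (-(N:ℤ)) * t) := by ring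
      _ = _ := by rw [this]
  have hVR : (1 + A * (2 - (N:ℝ)) * R ^ (-(N:ℤ))) * R = c := by
    rw [key_outer hN hr hrR]
    have hd : (0:ℝ) < R ^ (N-1) + r ^ (N-1) := by positivity
    simp only [hc]; field_simp
  have hVr : (1 + A * (2 - (N:ℝ)) * r ^ (-(N:ℤ))) * r = -c := by
    rw [key_inner hN hr hrR]
    have hd : (0:ℝ) < R ^ (N-1) + r ^ (N-1) := by positivity
    simp only [hc]; field_simp
  have hupper := V_mono hN (A_pos hN hr hrR) hρ h2
  have hlower := V_mono hN (A_pos hN hr hrR) hr h1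
  rw [hVform ρ hρ]
  rw [hVform R hR] at hVR
  rw [hVform r hr] at hVr
  rw [abs_le]
  constructor <;> [linarith [hlower]; linarith [hupper]]

end Shell18

namespace Shell18
open Filter
variable {N : ℕ}

lemma derivTest {h k : ℝ → ℝ} {L ε : ℝ} (hε : 0 < ε)
    (hk : ∀ t : ℝ, |t| < ε → HasDerivAt h (k t) t)
    (hL : HasDerivAt k L 0)
    (hmax : ∀ t : ℝ, |t| < ε → h t ≤ h 0) : L ≤ 0 := by
  by_contra hL0
  push_neg at hL0
  have hk0 : k 0 = 0 := by
    have hlm : IsLocalMax h 0 := by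
      filter_upwards [Metric.ball_mem_nhds 0 hε] with t ht
      exact hmax t (by simpa [Real.dist_eq] using ht)
    exact hlm.hasDerivAt_eq_zero (hk 0 (by simpa using hε))
  have hslope := hasDerivAt_iff_tendsto_slope.mp hL
  have h1 : ∀ᶠ t in 𝓝[≠] (0:ℝ), 0 < slope k 0 t :=
    hslope.eventually (eventually_gt_nhds hL0)
  have h2 : ∀ᶠ t in 𝓝[>] (0:ℝ), 0 < slope k 0 t :=
    h1.filter_mono (nhdsWithin_mono 0 (fun t (ht : t ∈ Ioi 0) => ne_of_gt ht))
  have h3 : ∀ᶠ t in 𝓝[>] (0:ℝ), 0 < k t := by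
    filter_upwards [h2, self_mem_nhdsWithin] with t h2t (htpos : t ∈ Ioi 0)
    have : slope k 0 t = k t / t := by
      simp [slope_def_field, hk0]
    rw [this] at h2t
    have := mul_pos h2t (show (0:ℝ) < t from htpos)
    rwa [div_mul_cancel₀ _ (ne_of_gt htpos)] at this
  rw [eventually_nhdsWithin_iff, Metric.eventually_nhds_iff] at h3
  obtain ⟨δ, hδ, hδ3⟩ := h3
  set t₀ := min ε δ / 2 with ht₀
  have ht₀pos : 0 < t₀ := by positivity
  have ht₀ε : t₀ < ε := by
    have := min_le_left ε δ; simp only [ht₀]; linarith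
  have ht₀δ : t₀ < δ := by
    have := min_le_right ε δ; simp only [ht₀]; linarith
  have hcont : ContinuousOn h (Icc 0 t₀) := by
    intro t ht
    have : |t| < ε := by
      rw [abs_lt]; constructor <;> [linarith [ht.1]; linarith [ht.2]]
    exact (hk t this).continuousAt.continuousWithinAt
  have hderiv : ∀ t ∈ Ioo (0:ℝ) t₀, HasDerivAt h (k t) t := by
    intro t ht
    have : |t| < ε := by rw [abs_lt]; constructor <;> [linarith [ht.1]; linarith [ht.2]]
    exact hk t this
  obtain ⟨ξ, hξ, hξeq⟩ := exists_hasDerivAt_eq_slope h k ht₀pos hcont hderiv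
  have hkξpos : 0 < k ξ := by
    apply hδ3
    · rw [Real.dist_eq, sub_zero, abs_lt]
      constructor <;> [linarith [hξ.1]; linarith [hξ.2]]
    · exact hξ.1
  have hw : h t₀ ≤ h 0 := hmax t₀ (by rw [abs_lt]; constructor <;> linarith)
  rw [hξeq] at hkξpos
  have : h t₀ - h 0 ≤ 0 := by linarith
  have : (h t₀ - h 0) / (t₀ - 0) ≤ 0 := div_nonpos_of_nonpos_of_nonneg this (by linarith)
  linarith

lemma lap_nonpos_of_isMaxOn {Ω : Set (Euc N)} (hΩ : IsOpen Ω) {w : Euc N → ℝ}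
    (hw : ContDiffOn ℝ 2 w Ω) {x : Euc N} (hx : x ∈ Ω) (hmax : IsMaxOn w Ω x) :
    lap w x ≤ 0 := by
  obtain ⟨ε, hε, hball⟩ := Metric.isOpen_iff.mp hΩ x hx
  have hCA : ContDiffAt ℝ 2 w x := hw.contDiffAt (hΩ.mem_nhds hx)
  have hd2 : DifferentiableAt ℝ (fderiv ℝ w) x :=
    (hCA.fderiv_right (m := 1) (by norm_num)).differentiableAt (by norm_num)
  have key : ∀ i : Fin N, fderiv ℝ (fderiv ℝ w) x (EuclideanSpace.single i 1)
      (EuclideanSpace.single i 1) ≤ 0 := by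
    intro i
    set Ei : Euc N := EuclideanSpace.single i (1:ℝ) with hEi
    have hnormE : ‖Ei‖ = 1 := by simp [hEi]
    set ℓ : ℝ → Euc N := fun t => x + t • Ei with hℓ
    have hline : ∀ t : ℝ, HasDerivAt ℓ Ei t := by
      intro t
      simpa [hℓ] using ((hasDerivAt_id t).smul_const Ei).const_add x
    have hℓ0 : ℓ 0 = x := by simp [hℓ]
    have hmem : ∀ t : ℝ, |t| < ε → ℓ t ∈ Ω := by
      intro t ht
      apply hball
      simp only [hℓ, Metric.mem_ball, dist_self_add_left, norm_smul, hnormE, mul_one,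
        Real.norm_eq_abs]
      exact ht
    have hk : ∀ t : ℝ, |t| < ε → HasDerivAt (fun s => w (ℓ s)) (fderiv ℝ w (ℓ t) Ei) t := by
      intro t ht
      have hdw : DifferentiableAt ℝ w (ℓ t) :=
        (hw.contDiffAt (hΩ.mem_nhds (hmem t ht))).differentiableAt (by norm_num)
      exact hdw.hasFDerivAt.comp_hasDerivAt t (hline t)
    have hΦ : HasFDerivAt (fun y => fderiv ℝ w y Ei) ((fderiv ℝ (fderiv ℝ w) x).flip Ei) x := by
      have := hd2.hasFDerivAt.clm_apply (hasFDerivAt_const Ei x)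
      simpa using this
    have hL : HasDerivAt (fun t => fderiv ℝ w (ℓ t) Ei)
        (fderiv ℝ (fderiv ℝ w) x Ei Ei) 0 := by
      have := (hℓ0 ▸ hΦ).comp_hasDerivAt 0 (hline 0)
      simp only [ContinuousLinearMap.flip_apply, hℓ0] at this
      exact this
    have hmax' : ∀ t : ℝ, |t| < ε → w (ℓ t) ≤ w (ℓ 0) := by
      intro t ht
      rw [hℓ0]
      exact hmax (hmem t ht)
    exact derivTest hε hk hL hmax'
  simp only [lap]
  exact Finset.sum_nonpos (fun i _ => key i)

lemma lap_combo {f g h : Euc N → ℝ} {x : Euc N} (α : ℝ)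
    (hf : ContDiffAt ℝ 2 f x) (hg : ContDiffAt ℝ 2 g x) (hh : ContDiffAt ℝ 2 h x) :
    lap (fun y => f y - g y + α * h y) x = lap f x - lap g x + α * lap h x := by
  have hev : (fderiv ℝ (fun y => f y - g y + α * h y)) =ᶠ[𝓝 x]
      (fun y => fderiv ℝ f y - fderiv ℝ g y + α • fderiv ℝ h y) := by
    filter_upwards [hf.eventually (by norm_num), hg.eventually (by norm_num),
      hh.eventually (by norm_num)] with y hfy hgy hhy
    have dfy : DifferentiableAt ℝ f y := hfy.differentiableAt (by norm_num)
    have dgy : DifferentiableAt ℝ g y := hgy.differentiableAt (by norm_num)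
    have dhy : DifferentiableAt ℝ h y := hhy.differentiableAt (by norm_num)
    rw [fderiv_fun_add (dfy.fun_sub dgy) (dhy.const_mul α), fderiv_fun_sub dfy dgy, fderiv_const_mul dhy α]
  have Df : DifferentiableAt ℝ (fderiv ℝ f) x :=
    (hf.fderiv_right (m := 1) (by norm_num)).differentiableAt (by norm_num)
  have Dg : DifferentiableAt ℝ (fderiv ℝ g) x :=
    (hg.fderiv_right (m := 1) (by norm_num)).differentiableAt (by norm_num)
  have Dh : DifferentiableAt ℝ (fderiv ℝ h) x :=
    (hh.fderiv_right (m := 1) (by norm_num)).differentiableAt (by norm_num)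
  have h2 : fderiv ℝ (fderiv ℝ (fun y => f y - g y + α * h y)) x
      = fderiv ℝ (fderiv ℝ f) x - fderiv ℝ (fderiv ℝ g) x + α • fderiv ℝ (fderiv ℝ h) x := by
    rw [hev.fderiv_eq, fderiv_fun_add (Df.fun_sub Dg) (Dh.fun_const_smul α), fderiv_fun_sub Df Dg,
      fderiv_fun_const_smul Dh α]
  simp only [lap, h2, ContinuousLinearMap.add_apply, ContinuousLinearMap.sub_apply,
    ContinuousLinearMap.coe_smul', Pi.smul_apply, smul_eq_mul]
  rw [Finset.sum_add_distrib, Finset.sum_sub_distrib, ← Finset.mul_sum]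

end Shell18

namespace Shell18
open Metric Set
variable {N : ℕ} {r R : ℝ}

lemma euc_nontrivial (hN : 3 ≤ N) : Nontrivial (Euc N) := by
  have : 0 < N := by omega
  exact ⟨0, EuclideanSpace.single ⟨0, this⟩ 1, by
    intro h
    have := congrArg (fun v : Euc N => v ⟨0, this⟩) h
    simpa using this⟩

lemma mem_shell_iff (hN : 3 ≤ N) (hr : 0 < r) {x : Euc N} :
    x ∈ ball (0 : Euc N) R \ closure (ball (0 : Euc N) r) ↔ r < ‖x‖ ∧ ‖x‖ < R := by
  haveI := euc_nontrivial (N := N) hN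
  rw [mem_diff, closure_ball (0 : Euc N) hr.ne', mem_ball_zero_iff, mem_closedBall_zero_iff]
  simp only [not_le]
  tauto

lemma closure_shell_subset (hN : 3 ≤ N) (hr : 0 < r) :
    closure (ball (0 : Euc N) R \ closure (ball (0 : Euc N) r))
      ⊆ {x : Euc N | r ≤ ‖x‖ ∧ ‖x‖ ≤ R} := by
  apply closure_minimal
  · intro x hx
    rw [mem_shell_iff hN hr] at hx
    exact ⟨hx.1.le, hx.2.le⟩
  · have : {x : Euc N | r ≤ ‖x‖ ∧ ‖x‖ ≤ R} = (fun x : Euc N => ‖x‖) ⁻¹' (Icc r R) := rfl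
    rw [this]
    exact isClosed_Icc.preimage continuous_norm

lemma sphere_R_mem_closure (hN : 3 ≤ N) (hr : 0 < r) (hrR : r < R) {x : Euc N} (hx : ‖x‖ = R) :
    x ∈ closure (ball (0 : Euc N) R \ closure (ball (0 : Euc N) r)) := by
  have hR : 0 < R := hr.trans hrR
  rw [Metric.mem_closure_iff]
  intro ε hε
  set ρ := max (R - ε/2) ((R + r)/2) with hρdef
  have hρR : ρ < R := by
    apply max_lt <;> linarith
  have hρr : r < ρ := lt_of_lt_of_le (by linarith) (le_max_right _ _)
  have hρpos : 0 < ρ := hr.trans hρr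
  refine ⟨(ρ/R) • x, ?_, ?_⟩
  · rw [mem_shell_iff hN hr]
    have : ‖(ρ/R) • x‖ = ρ := by
      rw [norm_smul, hx, Real.norm_eq_abs, abs_of_pos (by positivity),
        div_mul_cancel₀ _ hR.ne']
    rw [this]
    exact ⟨hρr, hρR⟩
  · have h1 : x - (ρ/R) • x = (1 - ρ/R) • x := by
      rw [sub_smul, one_smul]
    rw [dist_eq_norm, h1, norm_smul, hx, Real.norm_eq_abs,
      abs_of_nonneg (by rw [sub_nonneg]; exact div_le_one_of_le₀ hρR.le hR.le)]
    have : (1 - ρ/R) * R = R - ρ := by field_simp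
    rw [this]
    have : R - ρ ≤ ε/2 := by
      have := le_max_left (R - ε/2) ((R + r)/2)
      linarith
    linarith

end Shell18

namespace Shell18
open Metric Set Filter
variable {N : ℕ}

lemma boundary_contra {Ω : Set (Euc N)} {w : Euc N → ℝ} {G : Euc N → Euc N}
    {x₀ d : Euc N} {T : ℝ} (hT : 0 < T)
    (hwcont : ContinuousOn w (closure Ω))
    (hGcont : ContinuousOn G (closure Ω))
    (hGw : ∀ y ∈ Ω, HasGradientAt w (G y) y)
    (hx₀ : x₀ ∈ closure Ω)
    (hmax : IsMaxOn w (closure Ω) x₀)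
    (hpath : ∀ t : ℝ, 0 < t → t < T → x₀ + t • d ∈ Ω)
    (hpos : 0 < ⟪G x₀, d⟫) : False := by
  set γ : ℝ → Euc N := fun t => x₀ + t • d with hγ
  have hγ0 : γ 0 = x₀ := by simp [hγ]
  have hγcont : Continuous γ := by continuity
  have hγcl : ∀ t ∈ Icc (0:ℝ) (T/2), γ t ∈ closure Ω := by
    intro t ht
    rcases eq_or_lt_of_le ht.1 with h | h
    · rw [← h, hγ0]; exact hx₀
    · exact subset_closure (hpath t h (by linarith [ht.2]))
  set Γ : ℝ → ℝ := fun t => ⟪G (γ t), d⟫ with hΓ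
  have hΓcont : ContinuousWithinAt Γ (Icc (0:ℝ) (T/2)) 0 := by
    have h1 : ContinuousOn Γ (Icc (0:ℝ) (T/2)) :=
      ContinuousOn.inner (hGcont.comp hγcont.continuousOn hγcl) continuousOn_const
    exact h1 0 ⟨le_refl 0, by linarith⟩
  have hΓ0 : Γ 0 = ⟪G x₀, d⟫ := by rw [hΓ]; simp [hγ0]
  have hev : ∀ᶠ t in 𝓝[Icc (0:ℝ) (T/2)] 0, 0 < Γ t := by
    apply hΓcont.eventually ?_
    rw [hΓ0]
    exact eventually_gt_nhds hpos
  rw [eventually_nhdsWithin_iff, Metric.eventually_nhds_iff] at hev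
  obtain ⟨δ, hδpos, hδ⟩ := hev
  set ε := min (T/4) (δ/2) with hε
  have hεpos : 0 < ε := by positivity
  have hεT : ε ≤ T/4 := min_le_left _ _
  have hεδ : ε < δ := by
    have := min_le_right (T/4) (δ/2); simp only [hε]; linarith
  have hΓpos : ∀ t ∈ Icc (0:ℝ) ε, 0 < Γ t := by
    intro t ht
    apply hδ
    · rw [Real.dist_eq, sub_zero, abs_of_nonneg ht.1]; linarith [ht.2]
    · exact ⟨ht.1, by linarith [ht.2]⟩
  have hφcont : ContinuousOn (fun t => w (γ t)) (Icc (0:ℝ) ε) := by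
    apply (hwcont.comp hγcont.continuousOn)
    intro t ht
    exact hγcl t ⟨ht.1, by linarith [ht.2]⟩
  have hφderiv : ∀ t ∈ Ioo (0:ℝ) ε, HasDerivAt (fun t => w (γ t)) (Γ t) t := by
    intro t ht
    have hmem : γ t ∈ Ω := hpath t ht.1 (by linarith [ht.2])
    have hw : HasFDerivAt w (InnerProductSpace.toDual ℝ (Euc N) (G (γ t))) (γ t) :=
      (hGw (γ t) hmem).hasFDerivAt
    have hlineD : HasDerivAt γ d t := by
      simpa [hγ] using ((hasDerivAt_id t).smul_const d).const_add x₀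
    have := hw.comp_hasDerivAt t hlineD
    simp only [Function.comp_def, InnerProductSpace.toDual_apply_apply] at this
    exact this
  obtain ⟨ξ, hξ, hξeq⟩ := exists_hasDerivAt_eq_slope (fun t => w (γ t)) Γ hεpos hφcont hφderiv
  have h1 : 0 < Γ ξ := hΓpos ξ ⟨hξ.1.le, hξ.2.le⟩
  have h2 : w (γ ε) ≤ w (γ 0) := by
    rw [hγ0]
    exact hmax (hγcl ε ⟨hεpos.le, by linarith⟩)
  rw [hξeq] at h1
  have h3 : 0 < (w (γ ε) - w (γ 0)) / (ε - 0) := h1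
  have h4 : (w (γ ε) - w (γ 0)) / (ε - 0) ≤ 0 :=
    div_nonpos_of_nonpos_of_nonneg (by linarith) (by linarith)
  linarith

end Shell18

open Metric Set
open scoped RealInnerProductSpace

/-- For the spherical shell Ω = B(0,R) \ closure(B(0,r)) in ℝ^N (N ≥ 3,
0 < r < R), the function u(x) = ‖x‖²/2 + ((R+r)/((N−2)(R^{1−N}+r^{1−N}))) ‖x‖^{2−N}
satisfies Δu = N on Ω and ∇u = c·n on ∂Ω, with n the outward unit normal and
c = (R^N − r^N)/(R^{N−1} + r^{N−1}); consequently λ₁(Ω) = c. -/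
theorem lambda1_spherical_shell (N : ℕ) (hN : 3 ≤ N) (r R : ℝ) (hr : 0 < r) (hrR : r < R) :
    let Ω : Set (Euc N) := ball (0 : Euc N) R \ closure (ball (0 : Euc N) r)
    let u : Euc N → ℝ := fun x => ‖x‖ ^ 2 / 2 +
      ((R + r) / (((N : ℝ) - 2) * (R ^ ((1 : ℤ) - (N : ℤ)) + r ^ ((1 : ℤ) - (N : ℤ))))) *
        ‖x‖ ^ ((2 : ℤ) - (N : ℤ))
    let c : ℝ := (R ^ N - r ^ N) / (R ^ (N - 1) + r ^ (N - 1))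
    (∀ x ∈ Ω, lap u x = N) ∧
      (∀ x : Euc N, ‖x‖ = R → gradient u x = (c / R) • x) ∧
      (∀ x : Euc N, ‖x‖ = r → gradient u x = (-(c / r)) • x) ∧
      lambda1 N Ω = c := by
  intro Ω u c
  have hR : 0 < R := hr.trans hrR
  set A : ℝ := (R + r) / (((N : ℝ) - 2) * (R ^ ((1 : ℤ) - (N : ℤ)) + r ^ ((1 : ℤ) - (N : ℤ))))
    with hA
  have hu : u = Shell18.uA N A := rfl
  have hcdef : c = (R ^ N - r ^ N) / (R ^ (N - 1) + r ^ (N - 1)) := rfl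
  have hcpos : 0 < c := hcdef ▸ Shell18.c_pos hN hr hrR
  have hΩ_iff : ∀ {x : Euc N}, x ∈ Ω ↔ r < ‖x‖ ∧ ‖x‖ < R :=
    fun {x} => Shell18.mem_shell_iff hN hr
  have hΩne : ∀ {x : Euc N}, x ∈ Ω → x ≠ 0 := by
    intro x hx
    have := (hΩ_iff.mp hx).1
    intro h0; rw [h0] at this; simp at this; linarith
  have hclsub : closure Ω ⊆ {x : Euc N | r ≤ ‖x‖ ∧ ‖x‖ ≤ R} :=
    Shell18.closure_shell_subset hN hr
  have hclne : ∀ {x : Euc N}, x ∈ closure Ω → x ≠ 0 := by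
    intro x hx h0
    have := (hclsub hx).1
    rw [h0] at this; simp at this; linarith
  -- the two boundary coefficient identities
  have kR : 1 + A * (2 - (N:ℝ)) * R ^ (-(N:ℤ)) = c / R := by
    rw [hA, hcdef]; exact Shell18.key_outer hN hr hrR
  have kr : 1 + A * (2 - (N:ℝ)) * r ^ (-(N:ℤ)) = -(c / r) := by
    rw [hA, hcdef]; exact Shell18.key_inner hN hr hrR
  -- Part 1
  have part1 : ∀ x ∈ Ω, lap u x = N := by
    intro x hx
    rw [hu]
    exact Shell18.model_lap A (hΩne hx)
  -- Part 2
  have part2 : ∀ x : Euc N, ‖x‖ = R → gradient u x = (c / R) • x := by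
    intro x hx
    have hx0 : x ≠ 0 := by
      intro h0; rw [h0] at hx; simp at hx; linarith
    have := (Shell18.model_grad (N := N) A hx0).gradient
    rw [hu, this, Shell18.gA, hx, kR]
  -- Part 3
  have part3 : ∀ x : Euc N, ‖x‖ = r → gradient u x = (-(c / r)) • x := by
    intro x hx
    have hx0 : x ≠ 0 := by
      intro h0; rw [h0] at hx; simp at hx; linarith
    have := (Shell18.model_grad (N := N) A hx0).gradient
    rw [hu, this, Shell18.gA, hx, kr]
  refine ⟨part1, part2, part3, ?_⟩
  -- Part 4 : lambda1 N Ω = c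
  have hucont : ContinuousOn u (closure Ω) := fun x hx =>
    (hu ▸ (Shell18.model_contDiffAt (N := N) A (hclne hx)).continuousAt).continuousWithinAt
  have hgAcontAt : ∀ {x : Euc N}, x ≠ 0 → ContinuousAt (Shell18.gA N A) x := by
    intro x hx0
    have h1 : ContinuousAt (fun y : Euc N => ‖y‖ ^ (-(N:ℤ))) x :=
      (continuousAt_zpow₀ _ _ (Or.inl (norm_ne_zero_iff.mpr hx0))).comp
        continuous_norm.continuousAt
    exact (continuousAt_const.add (continuousAt_const.mul h1)).smul continuousAt_id
  have hgAcont : ContinuousOn (Shell18.gA N A) (closure Ω) := fun x hx =>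
    (hgAcontAt (hclne hx)).continuousWithinAt
  have huC2 : ContDiffOn ℝ 2 u Ω := fun x hx =>
    (hu ▸ (Shell18.model_contDiffAt (N := N) A (hΩne hx))).contDiffWithinAt
  have hNpos : 0 < N := by omega
  set xR : Euc N := EuclideanSpace.single (⟨0, hNpos⟩ : Fin N) (R : ℝ) with hxR
  have hxRnorm : ‖xR‖ = R := by rw [hxR, EuclideanSpace.norm_single]; exact abs_of_pos hR
  have hxRmem : xR ∈ closure Ω := Shell18.sphere_R_mem_closure hN hr hrR hxRnorm
  have hgAnorm_le : ∀ x ∈ closure Ω, ‖Shell18.gA N A x‖ ≤ c := by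
    intro x hx
    obtain ⟨h1, h2⟩ := hclsub hx
    simp only [Shell18.gA]
    have habs : ∀ a : ℝ, |a| * ‖x‖ = |a * ‖x‖| := fun a => by rw [abs_mul, abs_norm]
    rw [norm_smul, Real.norm_eq_abs, habs, hcdef, hA]
    exact Shell18.norm_bound hN hr hrR h1 h2
  have hgAxR : ‖Shell18.gA N A xR‖ = c := by
    simp only [Shell18.gA]
    rw [hxRnorm, kR, norm_smul, hxRnorm, Real.norm_eq_abs,
      abs_of_nonneg (div_nonneg hcpos.le hR.le), div_mul_cancel₀ _ hR.ne']
  have hgreatest : IsGreatest ((fun x => ‖Shell18.gA N A x‖) '' closure Ω) c :=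
    ⟨⟨xR, hxRmem, hgAxR⟩, by rintro s ⟨x, hx, rfl⟩; exact hgAnorm_le x hx⟩
  have hΩopen : IsOpen Ω := isOpen_ball.sdiff isClosed_closure
  have hcomp : IsCompact (closure Ω) :=
    (isCompact_closedBall (0 : Euc N) R).of_isClosed_subset isClosed_closure
      (fun x hx => mem_closedBall_zero_iff.mpr (hclsub hx).2)
  show lambda1 N Ω = c
  rw [lambda1]
  apply IsLeast.csInf_eq
  constructor
  · -- membership
    exact ⟨u, Shell18.gA N A,
      ⟨hucont, hgAcont, fun x hx => hu ▸ Shell18.model_grad A (hΩne hx)⟩,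
      huC2, part1, hgreatest.csSup_eq.symm⟩
  · -- lower bound
    rintro s ⟨u₁, g₁, ⟨hu₁c, hg₁c, hgrad⟩, hu₁2, hlap₁, rfl⟩
    set M := sSup ((fun x => ‖g₁ x‖) '' closure Ω) with hM
    have hbdd : BddAbove ((fun x => ‖g₁ x‖) '' closure Ω) :=
      (hcomp.image_of_continuousOn hg₁c.norm).bddAbove
    have hMge : ∀ x ∈ closure Ω, ‖g₁ x‖ ≤ M := fun x hx => le_csSup hbdd ⟨x, hx, rfl⟩
    by_contra hlt
    push_neg at hlt
    set δ : ℝ := (c - M) / (2 * R) with hδdef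
    have hδpos : 0 < δ := div_pos (by linarith) (by linarith)
    have hδR : δ * R = (c - M) / 2 := by rw [hδdef]; field_simp
    set w : Euc N → ℝ := fun y => u₁ y - u y + δ * Shell18.uA N 0 y with hw
    have hwcont : ContinuousOn w (closure Ω) :=
      (hu₁c.sub hucont).add (continuousOn_const.mul (fun x hx =>
        (Shell18.model_contDiffAt (N := N) 0 (hclne hx)).continuousAt.continuousWithinAt))
    obtain ⟨x₀, hx₀cl, hx₀max⟩ := hcomp.exists_isMaxOn ⟨xR, hxRmem⟩ hwcont
    set G : Euc N → Euc N := fun y => g₁ y - Shell18.gA N A y + δ • y with hG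
    have hgA0 : ∀ y : Euc N, Shell18.gA N 0 y = y := by
      intro y; simp [Shell18.gA]
    have hGgrad : ∀ y ∈ Ω, HasGradientAt w (G y) y := by
      intro y hy
      have h1 := (hgrad y hy).hasFDerivAt
      have h2 := (Shell18.model_grad (N := N) A (hΩne hy)).hasFDerivAt
      have h3 := (Shell18.model_grad (N := N) 0 (hΩne hy)).hasFDerivAt
      have h4 := (h1.sub (hu ▸ h2)).add (h3.const_mul δ)
      rw [hasGradientAt_iff_hasFDerivAt]
      refine h4.congr_fderiv ?_
      ext v
      simp only [hG, InnerProductSpace.toDual_apply_apply, inner_sub_left, inner_add_left,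
        inner_smul_left, conj_trivial, hgA0, ContinuousLinearMap.add_apply,
        ContinuousLinearMap.sub_apply, ContinuousLinearMap.coe_smul', Pi.smul_apply,
        smul_eq_mul]
    have hGcont : ContinuousOn G (closure Ω) :=
      (hg₁c.sub hgAcont).add ((continuous_id.const_smul δ).continuousOn)
    by_cases hx₀Ω : x₀ ∈ Ω
    · -- interior maximum: impossible since lap w > 0
      have hwC2 : ContDiffOn ℝ 2 w Ω :=
        (hu₁2.sub huC2).add (contDiffOn_const.mul (fun x hx =>
          (Shell18.model_contDiffAt 0 (hΩne hx)).contDiffWithinAt))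
      have h1 : lap w x₀ ≤ 0 :=
        Shell18.lap_nonpos_of_isMaxOn hΩopen hwC2 hx₀Ω (hx₀max.on_subset subset_closure)
      have h2 : lap w x₀ = lap u₁ x₀ - lap u x₀ + δ * lap (Shell18.uA N 0) x₀ := by
        rw [hw]
        exact Shell18.lap_combo δ (hu₁2.contDiffAt (hΩopen.mem_nhds hx₀Ω))
          (hu ▸ Shell18.model_contDiffAt A (hΩne hx₀Ω))
          (Shell18.model_contDiffAt 0 (hΩne hx₀Ω))
      rw [hlap₁ x₀ hx₀Ω, part1 x₀ hx₀Ω, Shell18.model_lap 0 (hΩne hx₀Ω)] at h2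
      have hN3 : (3:ℝ) ≤ (N:ℝ) := by exact_mod_cast hN
      nlinarith
    · -- boundary maximum: impossible since inward derivative is positive
      have hb := hclsub hx₀cl
      have hx₀0 : x₀ ≠ 0 := hclne hx₀cl
      have hq0 : (⟪x₀, x₀⟫ : ℝ) = ‖x₀‖ ^ 2 := real_inner_self_eq_norm_sq x₀
      have hρ : ‖x₀‖ = r ∨ ‖x₀‖ = R := by
        by_contra hcon
        push_neg at hcon
        exact hx₀Ω (hΩ_iff.mpr ⟨lt_of_le_of_ne hb.1 (Ne.symm hcon.1),
          lt_of_le_of_ne hb.2 hcon.2⟩)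
      have hg₁b : ‖g₁ x₀‖ ≤ M := hMge x₀ hx₀cl
      have hgAx₀ : Shell18.gA N A x₀ =
          (1 + A * (2 - (N:ℝ)) * ‖x₀‖ ^ (-(N:ℤ))) • x₀ := rfl
      rcases hρ with hρr | hρR
      · -- inner sphere
        set d : Euc N := (1/r) • x₀ with hd
        have hdnorm : ‖d‖ = 1 := by
          rw [hd, norm_smul, hρr, Real.norm_eq_abs, abs_of_pos (by positivity)]
          field_simp
        refine Shell18.boundary_contra (d := d) (T := R - r) (by linarith) hwcont hGcont hGgrad
          hx₀cl hx₀max ?_ ?_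
        · intro t ht1 ht2
          have hcomb : x₀ + t • d = (1 + t/r) • x₀ := by
            rw [hd, smul_smul, add_smul, one_smul, mul_one_div]
          apply hΩ_iff.mpr
          have hmul : (1 + t/r) * r = r + t := by field_simp
          rw [hcomb, norm_smul, hρr, Real.norm_eq_abs,
            abs_of_pos (by positivity : (0:ℝ) < 1 + t/r), hmul]
          constructor <;> linarith
        · -- positivity of ⟪G x₀, d⟫
          have e1 : ⟪Shell18.gA N A x₀, d⟫ = -c := by
            rw [hgAx₀, hρr, kr, hd, real_inner_smul_left, real_inner_smul_right, hq0, hρr]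
            field_simp
          have e2 : ⟪x₀, d⟫ = r := by
            rw [hd, real_inner_smul_right, hq0, hρr]
            field_simp
          have e3 : -M ≤ ⟪g₁ x₀, d⟫ := by
            have := abs_real_inner_le_norm (g₁ x₀) d
            rw [hdnorm, mul_one] at this
            have h4 := neg_le_of_abs_le this
            linarith
          have : ⟪G x₀, d⟫ = ⟪g₁ x₀, d⟫ - ⟪Shell18.gA N A x₀, d⟫ + δ * ⟪x₀, d⟫ := by
            rw [hG]
            simp only [inner_sub_left, inner_add_left, real_inner_smul_left]
          rw [this, e1, e2]
          have := mul_pos hδpos hr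
          linarith
      · -- outer sphere
        set d : Euc N := (-(1/R)) • x₀ with hd
        have hdnorm : ‖d‖ = 1 := by
          rw [hd, norm_smul, hρR, Real.norm_eq_abs, abs_neg, abs_of_pos (by positivity)]
          field_simp
        refine Shell18.boundary_contra (d := d) (T := R - r) (by linarith) hwcont hGcont hGgrad
          hx₀cl hx₀max ?_ ?_
        · intro t ht1 ht2
          have hcomb : x₀ + t • d = (1 - t/R) • x₀ := by
            rw [hd, smul_smul, sub_smul, one_smul]
            rw [show t * -(1/R) = -(t/R) by field_simp, neg_smul, ← sub_eq_add_neg]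
          apply hΩ_iff.mpr
          have htR : t/R < 1 := by
            rw [div_lt_one hR]; linarith
          have hmul : (1 - t/R) * R = R - t := by field_simp
          rw [hcomb, norm_smul, hρR, Real.norm_eq_abs,
            abs_of_pos (by linarith : (0:ℝ) < 1 - t/R), hmul]
          constructor <;> linarith
        · have e1 : ⟪Shell18.gA N A x₀, d⟫ = -c := by
            rw [hgAx₀, hρR, kR, hd, real_inner_smul_left, real_inner_smul_right, hq0, hρR]
            field_simp
          have e2 : ⟪x₀, d⟫ = -R := by
            rw [hd, real_inner_smul_right, hq0, hρR]
            field_simp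
          have e3 : -M ≤ ⟪g₁ x₀, d⟫ := by
            have := abs_real_inner_le_norm (g₁ x₀) d
            rw [hdnorm, mul_one] at this
            have h4 := neg_le_of_abs_le this
            linarith
          have : ⟪G x₀, d⟫ = ⟪g₁ x₀, d⟫ - ⟪Shell18.gA N A x₀, d⟫ + δ * ⟪x₀, d⟫ := by
            rw [hG]
            simp only [inner_sub_left, inner_add_left, real_inner_smul_left]
          rw [this, e1, e2]
          have hδR' : δ * -R = -((c - M)/2) := by rw [← hδR]; ring
          linarith
end Shell18Aux
end
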